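/- arXiv:2311.07847 — 10 statements merged into one kernel-verified Lean document; each statement's English description precedes it below -/
import Mathlib

section
/- Let φ : ℝⁿ → ℝ be twice continuously differentiable and convex, let f : ℝⁿ → ℝ be continuously differentiable, let g : ℝⁿ → ℝ be convex, and set Ψ := f + g. Fix x ∈ ℝⁿ and λ > 0, and let d ∈ ℝⁿ be a minimizer of u ↦ ⟨∇f(x), u⟩ + g(x + u) + (1/(2λ))⟨∇²φ(x)u, u⟩ over ℝⁿ. If d ≠ 0 and ⟨∇²φ(x)d, d⟩ > 0, then d is a descent direction for Ψ at x: there exists t̄ ∈ (0, 1] such that Ψ(x + t·d) < Ψ(x) for every t ∈ (0, t̄]. -/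
open scoped RealInnerProductSpace
open Set Filter Topology

/-- Hessian–vector product `∇²φ(x) d`. -/
noncomputable def hessApply {n : ℕ} (φ : EuclideanSpace ℝ (Fin n) → ℝ)
    (x d : EuclideanSpace ℝ (Fin n)) : EuclideanSpace ℝ (Fin n) :=
  fderiv ℝ (gradient φ) x d

/-!
Testing `u = 0` in the subproblem gives `⟨∇f(x), d⟩ + g(x + d) - g(x) ≤ -⟨∇²φ(x)d, d⟩/(2λ) < 0`.
Any direction with this negative first-order model decrease is a descent direction for `f + g`:
along `x + t d` the smooth part changes by `t ⟨∇f(x), d⟩ + o(t)`, while by convexity the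
nonsmooth part changes by at most `t (g(x + d) - g(x))`.
-/

theorem exists_Ioc_forall_of_eventually_nhdsGT {P : ℝ → Prop} (h : ∀ᶠ t in 𝓝[>] 0, P t) :
    ∃ tbar ∈ Ioc (0 : ℝ) 1, ∀ t ∈ Ioc 0 tbar, P t := by
  obtain ⟨u, hu, hsub⟩ := mem_nhdsGT_iff_exists_Ioc_subset.mp h
  refine ⟨min u 1, ⟨lt_min hu one_pos, min_le_right _ _⟩, fun t ht => hsub ?_⟩
  exact ⟨ht.1, ht.2.trans (min_le_left _ _)⟩

theorem HasDerivAt.eventually_lt_add_mul_of_lt {h : ℝ → ℝ} {L M : ℝ} (hh : HasDerivAt h L 0)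
    (hLM : L < M) : ∀ᶠ t in 𝓝[>] 0, h t < h 0 + t * M := by
  filter_upwards [hh.hasDerivWithinAt.limsup_slope_le' (self_notMem_Ioi (a := 0)) hLM,
    self_mem_nhdsWithin] with t hslope (ht : 0 < t)
  rw [slope_def_field, sub_zero, div_lt_iff₀ ht] at hslope
  linarith

section InnerProductSpace

variable {E : Type*} [NormedAddCommGroup E] [InnerProductSpace ℝ E]

theorem ConvexOn.le_add_mul_sub_of_mem_Icc {g : E → ℝ} (hg : ConvexOn ℝ univ g) (x d : E)
    {t : ℝ} (ht : t ∈ Icc (0 : ℝ) 1) : g (x + t • d) ≤ g x + t * (g (x + d) - g x) := by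
  have hconv := hg.2 (mem_univ x) (mem_univ (x + d)) (sub_nonneg.mpr ht.2) ht.1
    (sub_add_cancel 1 t)
  rw [show (1 - t) • x + t • (x + d) = x + t • d by module, smul_eq_mul, smul_eq_mul] at hconv
  linarith

theorem DifferentiableAt.hasDerivAt_comp_add_smul [CompleteSpace E] {f : E → ℝ} {x : E}
    (hf : DifferentiableAt ℝ f x) (d : E) :
    HasDerivAt (fun t : ℝ => f (x + t • d)) ⟪gradient f x, d⟫ 0 := by
  have hline : HasDerivAt (fun t : ℝ => x + t • d) d 0 :=
    ((hasDerivAt_id (0 : ℝ)).smul_const d).const_add x |>.congr_deriv (one_smul ℝ d)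
  have hf0 : HasFDerivAt f (fderiv ℝ f x) (x + (0 : ℝ) • d) := by
    rw [zero_smul, add_zero]
    exact hf.hasFDerivAt
  rw [inner_gradient_left]
  exact hf0.comp_hasDerivAt 0 hline

theorem eventually_add_lt_of_inner_gradient_add_sub_neg [CompleteSpace E] {f g : E → ℝ}
    {x d : E} (hf : DifferentiableAt ℝ f x) (hg : ConvexOn ℝ univ g)
    (hdesc : ⟪gradient f x, d⟫ + g (x + d) - g x < 0) :
    ∀ᶠ t in 𝓝[>] (0 : ℝ), f (x + t • d) + g (x + t • d) < f x + g x := by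
  set Δ := ⟪gradient f x, d⟫ + g (x + d) - g x
  have hsmooth := (hf.hasDerivAt_comp_add_smul d).eventually_lt_add_mul_of_lt
    (show ⟪gradient f x, d⟫ < ⟪gradient f x, d⟫ - Δ / 2 by linarith)
  filter_upwards [hsmooth, Ioo_mem_nhdsGT (zero_lt_one' ℝ)] with t hft ht
  have hgt := hg.le_add_mul_sub_of_mem_Icc x d (Ioo_subset_Icc_self ht)
  simp only [zero_smul, add_zero] at hft
  have hdecrease : t * Δ < 0 := mul_neg_of_pos_of_neg ht.1 hdesc
  linarith

end InnerProductSpace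

theorem abpg_descent_direction_general {n : ℕ}
    (φ f g : EuclideanSpace ℝ (Fin n) → ℝ)
    (hf : ContDiff ℝ 1 f) (hg : ConvexOn ℝ Set.univ g)
    (Ψ : EuclideanSpace ℝ (Fin n) → ℝ) (hΨ : Ψ = fun y => f y + g y)
    (x : EuclideanSpace ℝ (Fin n)) (lam : ℝ) (hlam : 0 < lam)
    (d : EuclideanSpace ℝ (Fin n))
    (hd : ∀ u : EuclideanSpace ℝ (Fin n),
      ⟪gradient f x, d⟫ + g (x + d) + (1 / (2 * lam)) * ⟪hessApply φ x d, d⟫ ≤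
      ⟪gradient f x, u⟫ + g (x + u) + (1 / (2 * lam)) * ⟪hessApply φ x u, u⟫)
    (hpos : 0 < ⟪hessApply φ x d, d⟫) :
    ∃ tbar : ℝ, tbar ∈ Set.Ioc (0 : ℝ) 1 ∧
      ∀ t ∈ Set.Ioc (0 : ℝ) tbar, Ψ (x + t • d) < Ψ x := by
  have hzero := hd 0
  rw [show hessApply φ x 0 = 0 from map_zero _] at hzero
  simp only [inner_zero_right, add_zero, mul_zero] at hzero
  have hdesc : ⟪gradient f x, d⟫ + g (x + d) - g x < 0 := by
    have : 0 < 1 / (2 * lam) * ⟪hessApply φ x d, d⟫ := by positivity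
    linarith
  subst hΨ
  exact exists_Ioc_forall_of_eventually_nhdsGT
    (eventually_add_lt_of_inner_gradient_add_sub_neg
      (hf.differentiable one_ne_zero).differentiableAt hg hdesc)

theorem abpg_descent_direction {n : ℕ}
    (φ f g : EuclideanSpace ℝ (Fin n) → ℝ)
    (hφ : ContDiff ℝ 2 φ) (hφconv : ConvexOn ℝ Set.univ φ)
    (hf : ContDiff ℝ 1 f) (hg : ConvexOn ℝ Set.univ g)
    (Ψ : EuclideanSpace ℝ (Fin n) → ℝ) (hΨ : Ψ = fun y => f y + g y)
    (x : EuclideanSpace ℝ (Fin n)) (lam : ℝ) (hlam : 0 < lam)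
    (d : EuclideanSpace ℝ (Fin n))
    (hd : ∀ u : EuclideanSpace ℝ (Fin n),
      ⟪gradient f x, d⟫ + g (x + d) + (1 / (2 * lam)) * ⟪hessApply φ x d, d⟫ ≤
      ⟪gradient f x, u⟫ + g (x + u) + (1 / (2 * lam)) * ⟪hessApply φ x u, u⟫)
    (hd0 : d ≠ 0) (hpos : 0 < ⟪hessApply φ x d, d⟫) :
    ∃ tbar : ℝ, tbar ∈ Set.Ioc (0 : ℝ) 1 ∧
      ∀ t ∈ Set.Ioc (0 : ℝ) tbar, Ψ (x + t • d) < Ψ x :=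
  abpg_descent_direction_general φ f g hf hg Ψ hΨ x lam hlam d hd hpos
end

section
/- Let φ : ℝⁿ → ℝ be twice continuously differentiable and σ-strongly convex for some σ > 0, let f : ℝⁿ → ℝ be continuously differentiable, let g : ℝⁿ → ℝ be convex, and set Ψ := f + g. Assume the pair (f, φ) is L-smad on ℝⁿ for some L > 0. Fix x ∈ ℝⁿ, λ > 0, α ∈ (0, 1), let d ∈ ℝⁿ be a minimizer of u ↦ ⟨∇f(x), u⟩ + g(x + u) + (1/(2λ))⟨∇²φ(x)u, u⟩ over ℝⁿ, and let β > 0 satisfy ⟨∇²φ(x + s·d)d, d⟩ ≤ β⟨∇²φ(x)d, d⟩ for all s ∈ [0, 1]. Then for every t with 0 < t ≤ min{1, (1 − α)/(βλL)}, the sufficient decrease condition holds: Ψ(x + t·d) ≤ Ψ(x) + α t (⟨∇f(x), d⟩ + g(x + d) − g(x)). -/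
/-!
Along the segment `s ↦ x + s • d`, convexity of `L φ - f` gives the descent inequality
`f (x + t d) ≤ f x + t ⟪∇f x, d⟫ + L D_φ(x + t d, x)`, and the curvature bound `β` turns
the Bregman term into at most `β t² ⟪∇²φ(x) d, d⟫ / 2`; convexity of `g` bounds
`g (x + t d)` by the chord. Comparing the subproblem at `d` with its value at `u = 0` shows
that the predicted decrease `⟪∇f x, d⟫ + g (x + d) - g x` is at most
`-⟪∇²φ(x) d, d⟫ / (2λ) ≤ 0`, and the step size bound `t ≤ (1 - α) / (βλL)` is exactly what
lets a `(1 - α)` share of this decrease absorb the quadratic term.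
-/

open scoped RealInnerProductSpace

open Set

section Line

variable {E : Type*} [NormedAddCommGroup E] [NormedSpace ℝ E]

theorem ConvexOn.comp_line {h : E → ℝ} (hh : ConvexOn ℝ univ h) (x v : E) :
    ConvexOn ℝ univ (fun s : ℝ => h (x + s • v)) := by
  have hline : (fun s : ℝ => h (x + s • v)) = h ∘ AffineMap.lineMap x (x + v) := by
    ext s
    simp [AffineMap.lineMap_apply, add_comm]
  rw [hline]
  simpa using hh.comp_affineMap (AffineMap.lineMap x (x + v))

theorem hasDerivAt_add_smul (x v : E) (s : ℝ) : HasDerivAt (fun s : ℝ => x + s • v) v s := by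
  simpa using ((hasDerivAt_id s).smul_const v).const_add x

theorem hasDerivAt_comp_line {h : E → ℝ} {x v : E} {s : ℝ}
    (hh : DifferentiableAt ℝ h (x + s • v)) :
    HasDerivAt (fun s : ℝ => h (x + s • v)) (fderiv ℝ h (x + s • v) v) s :=
  hh.hasFDerivAt.comp_hasDerivAt s (hasDerivAt_add_smul x v s)

theorem ConvexOn.fderiv_sub_le {h : E → ℝ} (hh : ConvexOn ℝ univ h) {x : E}
    (hx : DifferentiableAt ℝ h x) (y : E) :
    fderiv ℝ h x (y - x) ≤ h y - h x := by
  have hslope := (hh.comp_line x (y - x)).le_slope_of_hasDerivAt (mem_univ 0) (mem_univ 1)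
    one_pos (hasDerivAt_comp_line (by simpa using hx))
  simpa [slope_def_field] using hslope

end Line

theorem le_taylor_of_deriv2_le {q q' q'' : ℝ → ℝ} {a b M : ℝ}
    (hq : ∀ s, HasDerivAt q (q' s) s) (hq' : ∀ s, HasDerivAt q' (q'' s) s)
    (hM : ∀ s ∈ Ico a b, q'' s ≤ M) {t : ℝ} (ht : t ∈ Icc a b) :
    q t ≤ q a + q' a * (t - a) + M / 2 * (t - a) ^ 2 := by
  have hderiv_le : ∀ s ∈ Icc a b, q' s ≤ q' a + M * (s - a) := by
    refine image_le_of_deriv_right_le_deriv_boundary (B := fun s => q' a + M * (s - a))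
      (B' := fun _ => M) (fun s _ => (hq' s).continuousAt.continuousWithinAt)
      (fun s _ => (hq' s).hasDerivWithinAt)
      (by simp) (by fun_prop) (fun s _ => ?_) hM
    simpa using (((hasDerivAt_id s).sub_const a).const_mul M).const_add (q' a) |>.hasDerivWithinAt
  refine image_le_of_deriv_right_le_deriv_boundary
    (B := fun s => q a + q' a * (s - a) + M / 2 * (s - a) ^ 2) (B' := fun s => q' a + M * (s - a))
    (fun s _ => (hq s).continuousAt.continuousWithinAt) (fun s _ => (hq s).hasDerivWithinAt)
    (by simp) (by fun_prop) (fun s _ => ?_) (fun s hs => hderiv_le s (Ico_subset_Icc_self hs)) ht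
  have hB := ((((hasDerivAt_id s).sub_const a).const_mul (q' a)).const_add (q a)).add
    ((((hasDerivAt_id s).sub_const a).pow 2).const_mul (M / 2))
  exact (hB.congr_deriv (by simp only [id]; ring)).hasDerivWithinAt

section Bregman

variable {E : Type*} [NormedAddCommGroup E] [InnerProductSpace ℝ E] [CompleteSpace E]

noncomputable def bregmanDiv (h : E → ℝ) (y x : E) : ℝ :=
  h y - h x - ⟪gradient h x, y - x⟫

theorem bregmanDiv_le_mul_of_convexOn_mul_sub {φ f : E → ℝ} {L : ℝ}
    (hconv : ConvexOn ℝ univ (fun y => L * φ y - f y)) {x : E}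
    (hφ : DifferentiableAt ℝ φ x) (hf : DifferentiableAt ℝ f x) (y : E) :
    bregmanDiv f y x ≤ L * bregmanDiv φ y x := by
  have h := hconv.fderiv_sub_le ((hφ.const_mul L).sub hf) y
  have hderiv : HasFDerivAt (fun y => L * φ y - f y) (L • fderiv ℝ φ x - fderiv ℝ f x) x :=
    (hφ.hasFDerivAt.const_mul L).sub hf.hasFDerivAt
  rw [hderiv.fderiv] at h
  simp only [bregmanDiv, inner_gradient_left]
  simp only [sub_apply, smul_apply, smul_eq_mul] at h
  linarith

theorem bregmanDiv_add_smul {h : E → ℝ} (x v : E) (t : ℝ) :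
    bregmanDiv h (x + t • v) x = h (x + t • v) - h x - t * ⟪gradient h x, v⟫ := by
  simp [bregmanDiv, inner_smul_right]

end Bregman

section Hessian

variable {n : ℕ} {φ : EuclideanSpace ℝ (Fin n) → ℝ}

theorem hasDerivAt_inner_gradient_comp_line (hφ : ContDiff ℝ 2 φ)
    (x v : EuclideanSpace ℝ (Fin n)) (s : ℝ) :
    HasDerivAt (fun s : ℝ => ⟪gradient φ (x + s • v), v⟫) ⟪hessApply φ (x + s • v) v, v⟫ s := by
  -- `gradient φ` unfolds to `(toDual ℝ _).symm ∘ fderiv ℝ φ`.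
  have hgrad : Differentiable ℝ (gradient φ) :=
    (InnerProductSpace.toDual ℝ _).symm.differentiable.comp
      ((hφ.fderiv_right (m := 1) le_rfl).differentiable one_ne_zero)
  simpa [hessApply] using ((hgrad _).hasFDerivAt.comp_hasDerivAt s
    (hasDerivAt_add_smul x v s)).inner ℝ (hasDerivAt_const s v)

theorem inner_hessApply_self_nonneg (hconv : ConvexOn ℝ univ φ) (hφ : ContDiff ℝ 2 φ)
    (x v : EuclideanSpace ℝ (Fin n)) : 0 ≤ ⟪hessApply φ x v, v⟫ := by
  have hdiff : Differentiable ℝ φ := hφ.differentiable two_ne_zero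
  have hmono : Monotone (fun s : ℝ => ⟪gradient φ (x + s • v), v⟫) := by
    have h := (hconv.comp_line x v).monotoneOn_deriv
      (fun s _ => (hasDerivAt_comp_line (hdiff _)).differentiableAt)
    intro a b hab
    simpa only [inner_gradient_left, (hasDerivAt_comp_line (hdiff _)).deriv]
      using h (mem_univ a) (mem_univ b) hab
  simpa using (hasDerivAt_inner_gradient_comp_line hφ x v 0).nonneg_of_monotone hmono

theorem bregmanDiv_add_smul_le_of_inner_hessApply_le (hφ : ContDiff ℝ 2 φ)
    {x v : EuclideanSpace ℝ (Fin n)} {M t : ℝ}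
    (hM : ∀ s ∈ Ico 0 t, ⟪hessApply φ (x + s • v) v, v⟫ ≤ M) (ht : 0 ≤ t) :
    bregmanDiv φ (x + t • v) x ≤ M / 2 * t ^ 2 := by
  have hdiff : Differentiable ℝ φ := hφ.differentiable two_ne_zero
  have h := le_taylor_of_deriv2_le (q := fun s => φ (x + s • v))
    (fun s => by simpa only [inner_gradient_left] using hasDerivAt_comp_line (hdiff _))
    (hasDerivAt_inner_gradient_comp_line hφ x v) hM (right_mem_Icc.2 ht)
  simp only [zero_smul, add_zero, sub_zero] at h
  rw [bregmanDiv_add_smul]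
  linarith

theorem le_add_inner_gradient_add_of_convexOn_mul_sub {f : EuclideanSpace ℝ (Fin n) → ℝ} {L : ℝ}
    (hconv : ConvexOn ℝ univ (fun y => L * φ y - f y)) (hL : 0 ≤ L) (hφ : ContDiff ℝ 2 φ)
    {x v : EuclideanSpace ℝ (Fin n)} (hf : DifferentiableAt ℝ f x) {M t : ℝ}
    (hM : ∀ s ∈ Ico 0 t, ⟪hessApply φ (x + s • v) v, v⟫ ≤ M) (ht : 0 ≤ t) :
    f (x + t • v) ≤ f x + t * ⟪gradient f x, v⟫ + L * (M / 2 * t ^ 2) := by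
  have hbreg := bregmanDiv_le_mul_of_convexOn_mul_sub hconv (hφ.differentiable two_ne_zero x) hf
    (x + t • v)
  rw [bregmanDiv_add_smul] at hbreg
  linarith [mul_le_mul_of_nonneg_left (bregmanDiv_add_smul_le_of_inner_hessApply_le hφ hM ht) hL]

end Hessian

theorem abpg_sufficient_decrease_general {n : ℕ}
    (φ f g : EuclideanSpace ℝ (Fin n) → ℝ) (σ : ℝ) (hσ : 0 < σ)
    (hφ : ContDiff ℝ 2 φ)
    (hφsc : ConvexOn ℝ Set.univ (fun y => φ y - σ / 2 * ‖y‖ ^ 2))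
    (hf : ContDiff ℝ 1 f) (hg : ConvexOn ℝ Set.univ g)
    (Ψ : EuclideanSpace ℝ (Fin n) → ℝ) (hΨ : Ψ = fun y => f y + g y)
    (L : ℝ) (hL : 0 < L)
    (hsmad₁ : ConvexOn ℝ Set.univ (fun y => L * φ y - f y))
    (x : EuclideanSpace ℝ (Fin n)) (lam : ℝ) (hlam : 0 < lam)
    (α : ℝ) (hα : α ∈ Set.Ioo (0 : ℝ) 1)
    (d : EuclideanSpace ℝ (Fin n))
    (hd : ∀ u : EuclideanSpace ℝ (Fin n),
      ⟪gradient f x, d⟫ + g (x + d) + (1 / (2 * lam)) * ⟪hessApply φ x d, d⟫ ≤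
      ⟪gradient f x, u⟫ + g (x + u) + (1 / (2 * lam)) * ⟪hessApply φ x u, u⟫)
    (β : ℝ) (hβ : 0 < β)
    (hβbound : ∀ s ∈ Set.Icc (0 : ℝ) 1,
      ⟪hessApply φ (x + s • d) d, d⟫ ≤ β * ⟪hessApply φ x d, d⟫)
    (t : ℝ) (ht0 : 0 < t) (ht : t ≤ min 1 ((1 - α) / (β * lam * L))) :
    Ψ (x + t • d) ≤ Ψ x + α * t * (⟪gradient f x, d⟫ + g (x + d) - g x) := by
  obtain ⟨hα0, hα1⟩ := hα
  have ht1 : t ≤ 1 := ht.trans (min_le_left _ _)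
  have hstep : β * lam * L * t ≤ 1 - α := by
    rw [mul_comm]; exact (le_div_iff₀ (by positivity)).1 (ht.trans (min_le_right _ _))
  set Q := ⟪hessApply φ x d, d⟫
  have hφconv : ConvexOn ℝ univ φ :=
    strongConvexOn_zero.1 ((strongConvexOn_iff_convex.2 hφsc).mono hσ.le)
  have hQ : 0 ≤ Q := inner_hessApply_self_nonneg hφconv hφ x d
  have hΔ : ⟪gradient f x, d⟫ + g (x + d) - g x ≤ -(Q / (2 * lam)) := by
    have h := hd 0
    simp only [inner_zero_right, add_zero, mul_zero, zero_add, one_div_mul_eq_div] at h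
    linarith
  have hf_descent := le_add_inner_gradient_add_of_convexOn_mul_sub hsmad₁ hL.le hφ
    (hf.differentiable one_ne_zero x) (fun s hs => hβbound s ⟨hs.1, hs.2.le.trans ht1⟩) ht0.le
  have hg_chord : g (x + t • d) ≤ (1 - t) * g x + t * g (x + d) := by
    simpa using (hg.comp_line x d).2 (mem_univ 0) (mem_univ 1) (sub_nonneg.2 ht1) ht0.le (by ring)
  have hquad : L * (β * Q / 2 * t ^ 2) ≤ (1 - α) * t * (Q / (2 * lam)) := by
    calc L * (β * Q / 2 * t ^ 2) = (β * lam * L * t) * (t * (Q / (2 * lam))) := by field_simp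
      _ ≤ (1 - α) * (t * (Q / (2 * lam))) := by gcongr
      _ = (1 - α) * t * (Q / (2 * lam)) := by ring
  have hdecrease := mul_le_mul_of_nonneg_left hΔ (mul_nonneg (sub_nonneg.2 hα1.le) ht0.le)
  subst hΨ
  linear_combination hf_descent + hg_chord + hquad + hdecrease

theorem abpg_sufficient_decrease {n : ℕ}
    (φ f g : EuclideanSpace ℝ (Fin n) → ℝ) (σ : ℝ) (hσ : 0 < σ)
    (hφ : ContDiff ℝ 2 φ)
    (hφsc : ConvexOn ℝ Set.univ (fun y => φ y - σ / 2 * ‖y‖ ^ 2))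
    (hf : ContDiff ℝ 1 f) (hg : ConvexOn ℝ Set.univ g)
    (Ψ : EuclideanSpace ℝ (Fin n) → ℝ) (hΨ : Ψ = fun y => f y + g y)
    (L : ℝ) (hL : 0 < L)
    (hsmad₁ : ConvexOn ℝ Set.univ (fun y => L * φ y - f y))
    (hsmad₂ : ConvexOn ℝ Set.univ (fun y => L * φ y + f y))
    (x : EuclideanSpace ℝ (Fin n)) (lam : ℝ) (hlam : 0 < lam)
    (α : ℝ) (hα : α ∈ Set.Ioo (0 : ℝ) 1)
    (d : EuclideanSpace ℝ (Fin n))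
    (hd : ∀ u : EuclideanSpace ℝ (Fin n),
      ⟪gradient f x, d⟫ + g (x + d) + (1 / (2 * lam)) * ⟪hessApply φ x d, d⟫ ≤
      ⟪gradient f x, u⟫ + g (x + u) + (1 / (2 * lam)) * ⟪hessApply φ x u, u⟫)
    (β : ℝ) (hβ : 0 < β)
    (hβbound : ∀ s ∈ Set.Icc (0 : ℝ) 1,
      ⟪hessApply φ (x + s • d) d, d⟫ ≤ β * ⟪hessApply φ x d, d⟫)
    (t : ℝ) (ht0 : 0 < t) (ht : t ≤ min 1 ((1 - α) / (β * lam * L))) :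
    Ψ (x + t • d) ≤ Ψ x + α * t * (⟪gradient f x, d⟫ + g (x + d) - g x) :=
  abpg_sufficient_decrease_general φ f g σ hσ hφ hφsc hf hg Ψ hΨ L hL hsmad₁ x lam hlam α hα d hd β
    hβ hβbound t ht0 ht
end

section
/- Let φ : ℝⁿ → ℝ be twice continuously differentiable and convex, let f : ℝⁿ → ℝ be continuously differentiable, let g : ℝⁿ → ℝ be convex, and set Ψ := f + g. Fix x ∈ ℝⁿ, λ > 0, α ∈ (0, 1), t ∈ (0, 1], and let d ∈ ℝⁿ be a minimizer of u ↦ ⟨∇f(x), u⟩ + g(x + u) + (1/(2λ))⟨∇²φ(x)u, u⟩ over ℝⁿ. If the sufficient decrease condition Ψ(x + t·d) ≤ Ψ(x) + α t (⟨∇f(x), d⟩ + g(x + d) − g(x)) holds, then Ψ(x + t·d) ≤ Ψ(x) − (α t/(2λ))⟨∇²φ(x)d, d⟩. -/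
open scoped RealInnerProductSpace

theorem abpg_sufficient_decrease_hessian_form {n : ℕ}
    (φ f g : EuclideanSpace ℝ (Fin n) → ℝ)
    (hφ : ContDiff ℝ 2 φ) (hφconv : ConvexOn ℝ Set.univ φ)
    (hf : ContDiff ℝ 1 f) (hg : ConvexOn ℝ Set.univ g)
    (Ψ : EuclideanSpace ℝ (Fin n) → ℝ) (hΨ : Ψ = fun y => f y + g y)
    (x : EuclideanSpace ℝ (Fin n)) (lam : ℝ) (hlam : 0 < lam)
    (α : ℝ) (hα : α ∈ Set.Ioo (0 : ℝ) 1)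
    (t : ℝ) (ht : t ∈ Set.Ioc (0 : ℝ) 1)
    (d : EuclideanSpace ℝ (Fin n))
    (hd : ∀ u : EuclideanSpace ℝ (Fin n),
      ⟪gradient f x, d⟫ + g (x + d) + (1 / (2 * lam)) * ⟪hessApply φ x d, d⟫ ≤
      ⟪gradient f x, u⟫ + g (x + u) + (1 / (2 * lam)) * ⟪hessApply φ x u, u⟫)
    (hsuff : Ψ (x + t • d) ≤
      Ψ x + α * t * (⟪gradient f x, d⟫ + g (x + d) - g x)) :
    Ψ (x + t • d) ≤ Ψ x - α * t / (2 * lam) * ⟪hessApply φ x d, d⟫ := by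
  have h0 := hd 0
  simp only [inner_zero_right, add_zero] at h0
  -- h0 : ⟪∇f x, d⟫ + g (x + d) + (1/(2λ))⟪Hd,d⟫ ≤ g x
  have hαt : 0 < α * t := mul_pos hα.1 ht.1
  have key : α * t * (⟪gradient f x, d⟫ + g (x + d) - g x) ≤
      -(α * t / (2 * lam) * ⟪hessApply φ x d, d⟫) := by
    have h1 : ⟪gradient f x, d⟫ + g (x + d) - g x ≤
        -((1 / (2 * lam)) * ⟪hessApply φ x d, d⟫) := by linarith
    have := mul_le_mul_of_nonneg_left h1 hαt.le
    calc α * t * (⟪gradient f x, d⟫ + g (x + d) - g x)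
        ≤ α * t * -((1 / (2 * lam)) * ⟪hessApply φ x d, d⟫) := this
      _ = -(α * t / (2 * lam) * ⟪hessApply φ x d, d⟫) := by ring
  linarith
end

section
/- Let φ : ℝⁿ → ℝ be twice continuously differentiable, let f : ℝⁿ → ℝ be continuously differentiable, and let g : ℝⁿ → ℝ be convex. Fix λ > 0, and let sequences x^k ∈ ℝⁿ and d^k ∈ ℝⁿ be such that {x^k} is bounded, d^k → 0, and for every k the first-order optimality condition of the ABPG subproblem holds: for all u ∈ ℝⁿ, g(u) ≥ g(x^k + d^k) + ⟨−∇f(x^k) − (1/λ)∇²φ(x^k)d^k, u − (x^k + d^k)⟩. Then every accumulation point x̃ of {x^k} is a stationary point: for all u ∈ ℝⁿ, g(u) ≥ g(x̃) + ⟨−∇f(x̃), u − x̃⟩; that is, −∇f(x̃) is a subgradient of g at x̃, equivalently 0 ∈ ∇f(x̃) + ∂g(x̃). -/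
open scoped RealInnerProductSpace

/-!
Along a subsequence `x (k j) → x̃` we have `d (k j) → 0`, so `x (k j) + d (k j) → x̃`, and the
Hessian term `∇²φ(x (k j)) d (k j)` vanishes in the limit because `∇²φ` is continuous. The
subgradients `-∇f(x (k j)) - λ⁻¹ ∇²φ(x (k j)) d (k j)` therefore tend to `-∇f(x̃)`, and the
subgradient inequality passes to the limit since a convex function on `ℝⁿ` is continuous.
-/

open Filter Topology

section Gradient

variable {E : Type*} [NormedAddCommGroup E] [InnerProductSpace ℝ E] [CompleteSpace E]
  {f : E → ℝ}

theorem ContDiff.contDiff_gradient {m k : WithTop ℕ∞} (hf : ContDiff ℝ k f) (hmk : m + 1 ≤ k) :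
    ContDiff ℝ m (gradient f) :=
  (InnerProductSpace.toDual ℝ E).symm.toContinuousLinearEquiv.contDiff.comp
    (hf.fderiv_right hmk)

theorem ContDiff.continuous_gradient (hf : ContDiff ℝ 1 f) : Continuous (gradient f) :=
  (hf.contDiff_gradient (m := 0) (by norm_num)).continuous

end Gradient

theorem tendsto_hessApply_zero {n : ℕ} {φ : EuclideanSpace ℝ (Fin n) → ℝ} (hφ : ContDiff ℝ 2 φ)
    {α : Type*} {l : Filter α} {y v : α → EuclideanSpace ℝ (Fin n)}
    {y₀ : EuclideanSpace ℝ (Fin n)} (hy : Tendsto y l (𝓝 y₀)) (hv : Tendsto v l (𝓝 0)) :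
    Tendsto (fun j => hessApply φ (y j) (v j)) l (𝓝 0) := by
  have hHess : Continuous (fderiv ℝ (gradient φ)) :=
    (hφ.contDiff_gradient (by norm_num)).continuous_fderiv one_ne_zero
  have := isBoundedBilinearMap_apply.continuous.tendsto (fderiv ℝ (gradient φ) y₀, 0)
    |>.comp (((hHess.tendsto y₀).comp hy).prodMk_nhds hv)
  simpa [hessApply, Function.comp_def] using this

theorem Continuous.ge_add_inner_of_tendsto {E : Type*} [NormedAddCommGroup E]
    [InnerProductSpace ℝ E] {g : E → ℝ} (hg : Continuous g) {α : Type*} {l : Filter α} [l.NeBot]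
    {y ξ : α → E} {y₀ ξ₀ u : E} (hy : Tendsto y l (𝓝 y₀)) (hξ : Tendsto ξ l (𝓝 ξ₀))
    (hsub : ∀ᶠ j in l, g u ≥ g (y j) + ⟪ξ j, u - y j⟫) :
    g u ≥ g y₀ + ⟪ξ₀, u - y₀⟫ :=
  le_of_tendsto (((hg.tendsto y₀).comp hy).add (hξ.inner (tendsto_const_nhds.sub hy))) hsub

theorem abpg_accumulation_points_are_stationary_general {n : ℕ}
    (φ f g : EuclideanSpace ℝ (Fin n) → ℝ)
    (hφ : ContDiff ℝ 2 φ) (hf : ContDiff ℝ 1 f) (hg : ConvexOn ℝ Set.univ g)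
    (lam : ℝ)
    (x d : ℕ → EuclideanSpace ℝ (Fin n))
    (hd0 : Filter.Tendsto d Filter.atTop (nhds 0))
    (hopt : ∀ k, ∀ u : EuclideanSpace ℝ (Fin n),
      g u ≥ g (x k + d k) +
        ⟪-gradient f (x k) - (1 / lam) • hessApply φ (x k) (d k),
          u - (x k + d k)⟫)
    (xtilde : EuclideanSpace ℝ (Fin n))
    (hacc : ∃ k : ℕ → ℕ, StrictMono k ∧
      Filter.Tendsto (fun j => x (k j)) Filter.atTop (nhds xtilde)) :
    ∀ u : EuclideanSpace ℝ (Fin n),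
      g u ≥ g xtilde + ⟪-gradient f xtilde, u - xtilde⟫ := by
  intro u
  obtain ⟨k, hk, hxk⟩ := hacc
  have hdk : Tendsto (fun j => d (k j)) atTop (𝓝 0) := hd0.comp hk.tendsto_atTop
  have hy : Tendsto (fun j => x (k j) + d (k j)) atTop (𝓝 xtilde) := by
    simpa using hxk.add hdk
  have hξ : Tendsto (fun j => -gradient f (x (k j)) - (1 / lam) • hessApply φ (x (k j)) (d (k j)))
      atTop (𝓝 (-gradient f xtilde)) := by
    simpa using (((hf.continuous_gradient.tendsto xtilde).comp hxk).neg.sub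
      ((tendsto_hessApply_zero hφ hxk hdk).const_smul (1 / lam)))
  have hgc : Continuous g := continuousOn_univ.mp (hg.continuousOn isOpen_univ)
  exact hgc.ge_add_inner_of_tendsto hy hξ (Eventually.of_forall fun j => hopt (k j) u)

theorem abpg_accumulation_points_are_stationary {n : ℕ}
    (φ f g : EuclideanSpace ℝ (Fin n) → ℝ)
    (hφ : ContDiff ℝ 2 φ) (hf : ContDiff ℝ 1 f) (hg : ConvexOn ℝ Set.univ g)
    (lam : ℝ) (hlam : 0 < lam)
    (x d : ℕ → EuclideanSpace ℝ (Fin n))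
    (hxbdd : Bornology.IsBounded (Set.range x))
    (hd0 : Filter.Tendsto d Filter.atTop (nhds 0))
    (hopt : ∀ k, ∀ u : EuclideanSpace ℝ (Fin n),
      g u ≥ g (x k + d k) +
        ⟪-gradient f (x k) - (1 / lam) • hessApply φ (x k) (d k),
          u - (x k + d k)⟫)
    (xtilde : EuclideanSpace ℝ (Fin n))
    (hacc : ∃ k : ℕ → ℕ, StrictMono k ∧
      Filter.Tendsto (fun j => x (k j)) Filter.atTop (nhds xtilde)) :
    ∀ u : EuclideanSpace ℝ (Fin n),
      g u ≥ g xtilde + ⟪-gradient f xtilde, u - xtilde⟫ :=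
  abpg_accumulation_points_are_stationary_general φ f g hφ hf hg lam x d hd0 hopt xtilde hacc
end

section
/- Let φ : ℝⁿ → ℝ be twice continuously differentiable and let f : ℝⁿ → ℝ be continuously differentiable with ∇f Lipschitz continuous on every bounded subset of ℝⁿ. Fix λ > 0, and let sequences x^k ∈ ℝⁿ, d^k ∈ ℝⁿ, t_k ∈ (0, 1] satisfy, for every k: ∇f(x^k) + (1/λ)∇²φ(x^k)d^k = 0 and x^{k+1} = x^k + t_k·d^k. If {x^k} is bounded, then there exists A₀ > 0 such that ‖∇f(x^k)‖ ≤ A₀‖d^{k−1}‖ for all k ≥ 1; in particular, if ‖d^k‖ → 0 then ‖∇f(x^k)‖ → 0. -/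
open scoped RealInnerProductSpace NNReal

/-!
On the compact closure of the range of `x` the continuous Hessian of `φ` is bounded by some
`M`, so the optimality condition gives `‖∇f(x k)‖ ≤ (M / |λ|) ‖d k‖`. Since
`‖x (k+1) - x k‖ = t k ‖d k‖ ≤ ‖d k‖`, the Lipschitz bound `K` of `∇f` on the range of `x`
then gives `‖∇f(x (k+1))‖ ≤ (K + M / |λ|) ‖d k‖`.
-/

open Filter Topology

section Gradient

variable {E : Type*} [NormedAddCommGroup E] [InnerProductSpace ℝ E] [CompleteSpace E]

theorem ContDiff.continuous_fderiv_gradient {φ : E → ℝ} (hφ : ContDiff ℝ 2 φ) :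
    Continuous (fderiv ℝ (gradient φ)) := by
  have hgrad : ContDiff ℝ 1 (gradient φ) :=
    (InnerProductSpace.toDual ℝ E).symm.contDiff.comp (hφ.fderiv_right (by norm_num))
  exact hgrad.continuous_fderiv one_ne_zero

end Gradient

theorem exists_bound_hessApply_of_isBounded {n : ℕ} {φ : EuclideanSpace ℝ (Fin n) → ℝ}
    (hφ : ContDiff ℝ 2 φ) {s : Set (EuclideanSpace ℝ (Fin n))} (hs : Bornology.IsBounded s) :
    ∃ M, 0 ≤ M ∧ ∀ y ∈ s, ∀ v, ‖hessApply φ y v‖ ≤ M * ‖v‖ := by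
  obtain ⟨M, hM⟩ := hs.isCompact_closure.exists_bound_of_continuousOn
    hφ.continuous_fderiv_gradient.continuousOn
  refine ⟨max M 0, le_max_right _ _, fun y hy v => ?_⟩
  calc ‖hessApply φ y v‖ ≤ ‖fderiv ℝ (gradient φ) y‖ * ‖v‖ := (fderiv ℝ (gradient φ) y).le_opNorm v
    _ ≤ max M 0 * ‖v‖ := by gcongr; exact (hM y (subset_closure hy)).trans (le_max_left _ _)

section Normed

variable {F : Type*} [NormedAddCommGroup F] [NormedSpace ℝ F]

theorem norm_le_of_add_smul_eq_zero {g v : F} {c M r : ℝ} (h : g + c • v = 0)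
    (hv : ‖v‖ ≤ M * r) : ‖g‖ ≤ |c| * M * r := by
  rw [eq_neg_of_add_eq_zero_left h, norm_neg, norm_smul, Real.norm_eq_abs, mul_assoc]
  exact mul_le_mul_of_nonneg_left hv (abs_nonneg c)

theorem norm_sub_le_of_eq_add_smul {x y d : F} {t : ℝ} (ht : t ∈ Set.Icc (0 : ℝ) 1)
    (h : y = x + t • d) : ‖y - x‖ ≤ ‖d‖ := by
  rw [h, add_sub_cancel_left, norm_smul, Real.norm_of_nonneg ht.1]
  exact mul_le_of_le_one_left (norm_nonneg d) ht.2

theorem norm_apply_succ_le_of_preconditioned_step {g : F → F} {H : ℕ → F → F} {x d : ℕ → F}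
    {t : ℕ → ℝ} {c M : ℝ} {K : ℝ≥0} (hg : LipschitzOnWith K g (Set.range x))
    (hH : ∀ k v, ‖H k v‖ ≤ M * ‖v‖) (ht : ∀ k, t k ∈ Set.Icc (0 : ℝ) 1)
    (hopt : ∀ k, g (x k) + c • H k (d k) = 0) (hupd : ∀ k, x (k + 1) = x k + t k • d k)
    (k : ℕ) : ‖g (x (k + 1))‖ ≤ (K + |c| * M) * ‖d k‖ := by
  have hlip : ‖g (x (k + 1)) - g (x k)‖ ≤ K * ‖d k‖ := by
    rw [← dist_eq_norm]
    calc dist (g (x (k + 1))) (g (x k)) ≤ K * dist (x (k + 1)) (x k) :=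
          hg.dist_le_mul _ (Set.mem_range_self _) _ (Set.mem_range_self _)
      _ ≤ K * ‖d k‖ := by
          rw [dist_eq_norm]; gcongr; exact norm_sub_le_of_eq_add_smul (ht k) (hupd k)
  calc ‖g (x (k + 1))‖ ≤ ‖g (x (k + 1)) - g (x k)‖ + ‖g (x k)‖ := norm_le_norm_sub_add _ _
    _ ≤ K * ‖d k‖ + |c| * M * ‖d k‖ :=
        add_le_add hlip (norm_le_of_add_smul_eq_zero (hopt k) (hH k (d k)))
    _ = (K + |c| * M) * ‖d k‖ := by ring

end Normed

theorem tendsto_zero_of_le_mul_pred {a b : ℕ → ℝ} {A : ℝ} (ha : ∀ k, 0 ≤ a k)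
    (hab : ∀ k, a (k + 1) ≤ A * b k) (hb : Tendsto b atTop (𝓝 0)) :
    Tendsto a atTop (𝓝 0) :=
  (tendsto_add_atTop_iff_nat 1).1 <|
    squeeze_zero (fun k => ha (k + 1)) hab (by simpa using hb.const_mul A)

theorem abpg_gradient_bound_general {n : ℕ}
    (φ f : EuclideanSpace ℝ (Fin n) → ℝ)
    (hφ : ContDiff ℝ 2 φ)
    (hlip : ∀ s : Set (EuclideanSpace ℝ (Fin n)), Bornology.IsBounded s →
      ∃ K : ℝ≥0, LipschitzOnWith K (gradient f) s)
    (lam : ℝ)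
    (x d : ℕ → EuclideanSpace ℝ (Fin n)) (t : ℕ → ℝ)
    (ht : ∀ k, t k ∈ Set.Ioc (0 : ℝ) 1)
    (hopt : ∀ k, gradient f (x k) + (1 / lam) • hessApply φ (x k) (d k) = 0)
    (hupd : ∀ k, x (k + 1) = x k + t k • d k)
    (hxbdd : Bornology.IsBounded (Set.range x)) :
    (∃ A₀ : ℝ, 0 < A₀ ∧ ∀ k : ℕ, 1 ≤ k →
        ‖gradient f (x k)‖ ≤ A₀ * ‖d (k - 1)‖) ∧
      (Filter.Tendsto (fun k => ‖d k‖) Filter.atTop (nhds 0) →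
        Filter.Tendsto (fun k => ‖gradient f (x k)‖) Filter.atTop (nhds 0)) := by
  obtain ⟨M, hM0, hM⟩ := exists_bound_hessApply_of_isBounded hφ hxbdd
  obtain ⟨K, hK⟩ := hlip _ hxbdd
  set A₀ : ℝ := K + |1 / lam| * M + 1
  have hstep : ∀ k, ‖gradient f (x (k + 1))‖ ≤ A₀ * ‖d k‖ := fun k =>
    (norm_apply_succ_le_of_preconditioned_step hK (fun k => hM _ (Set.mem_range_self k))
      (fun k => Set.Ioc_subset_Icc_self (ht k)) hopt hupd k).trans
      (by gcongr; linarith)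
  refine ⟨⟨A₀, by positivity, fun k hk => ?_⟩,
    tendsto_zero_of_le_mul_pred (fun _ => norm_nonneg _) hstep⟩
  obtain ⟨m, rfl⟩ := Nat.exists_eq_add_of_le' hk
  simpa using hstep m

theorem abpg_gradient_bound {n : ℕ}
    (φ f : EuclideanSpace ℝ (Fin n) → ℝ)
    (hφ : ContDiff ℝ 2 φ) (hf : ContDiff ℝ 1 f)
    (hlip : ∀ s : Set (EuclideanSpace ℝ (Fin n)), Bornology.IsBounded s →
      ∃ K : ℝ≥0, LipschitzOnWith K (gradient f) s)
    (lam : ℝ) (hlam : 0 < lam)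
    (x d : ℕ → EuclideanSpace ℝ (Fin n)) (t : ℕ → ℝ)
    (ht : ∀ k, t k ∈ Set.Ioc (0 : ℝ) 1)
    (hopt : ∀ k, gradient f (x k) + (1 / lam) • hessApply φ (x k) (d k) = 0)
    (hupd : ∀ k, x (k + 1) = x k + t k • d k)
    (hxbdd : Bornology.IsBounded (Set.range x)) :
    (∃ A₀ : ℝ, 0 < A₀ ∧ ∀ k : ℕ, 1 ≤ k →
        ‖gradient f (x k)‖ ≤ A₀ * ‖d (k - 1)‖) ∧
      (Filter.Tendsto (fun k => ‖d k‖) Filter.atTop (nhds 0) →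
        Filter.Tendsto (fun k => ‖gradient f (x k)‖) Filter.atTop (nhds 0)) :=
  abpg_gradient_bound_general φ f hφ hlip lam x d t ht hopt hupd hxbdd
end

section
/- Consider an ABPG sequence with g ≡ 0 (see context), and assume additionally that f is a KL function: for every x̄ ∈ ℝⁿ there exist η ∈ (0, +∞], a neighborhood U of x̄, and a function ψ : [0, η) → [0, ∞) that is continuous, concave, vanishes at 0, and is continuously differentiable with positive derivative on (0, η), such that ψ′(f(x) − f(x̄))·‖∇f(x)‖ ≥ 1 for all x ∈ U with f(x̄) < f(x) < f(x̄) + η. Then ∑_{k≥0} ‖x^{k+1} − x^k‖ < ∞, and the sequence {x^k} converges to a point x̃ with ∇f(x̃) = 0. -/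
/-!
Strong convexity of `φ` gives `⟪∇²φ(x) d, d⟫ ≥ σ ‖d‖²`, so the line-search condition is a
sufficient decrease `f(xᵏ⁺¹) ≤ f(xᵏ) - a ‖xᵏ⁺¹ - xᵏ‖²`; the optimality condition, together with a
bound on `∇²φ` over the compact initial sublevel set, gives the relative error
`‖∇f(xᵏ)‖ ≤ b ‖xᵏ⁺¹ - xᵏ‖`. The iterates have a cluster point `x̄` with `f(xᵏ) ↓ f(x̄)`. Near `x̄`,
concavity of the desingularizing function `ψ` combines both estimates with the KL inequality into
`‖xᵏ⁺¹ - xᵏ‖ ≤ (b / a) (ψ(f(xᵏ) - f(x̄)) - ψ(f(xᵏ⁺¹) - f(x̄)))`. This telescopes, so once the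
iterates are close enough to `x̄` they never leave a ball on which KL holds and their steps are
summable. Hence `xᵏ` converges, and its limit is critical because `∇f(xᵏ) → 0`.
-/

open scoped RealInnerProductSpace NNReal

open Set Filter Topology

structure IsDesingularizing (η : ℝ) (ψ ψ' : ℝ → ℝ) : Prop where
  pos : 0 < η
  continuousOn : ContinuousOn ψ (Ico 0 η)
  concaveOn : ConcaveOn ℝ (Ico 0 η) ψ
  map_zero : ψ 0 = 0
  hasDerivAt : ∀ s ∈ Ioo 0 η, HasDerivAt ψ (ψ' s) s
  deriv_pos : ∀ s ∈ Ioo 0 η, 0 < ψ' s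

namespace IsDesingularizing

variable {η : ℝ} {ψ ψ' : ℝ → ℝ}

theorem mul_sub_le_sub (hψ : IsDesingularizing η ψ ψ') {r s : ℝ} (hr : 0 ≤ r) (hrs : r < s)
    (hs : s < η) : ψ' s * (s - r) ≤ ψ s - ψ r := by
  have hslope := hψ.concaveOn.le_slope_of_hasDerivAt ⟨hr, hrs.trans hs⟩ ⟨hr.trans hrs.le, hs⟩ hrs
    (hψ.hasDerivAt s ⟨hr.trans_lt hrs, hs⟩)
  rwa [slope_def_field, le_div_iff₀ (sub_pos.mpr hrs)] at hslope

theorem monotoneOn (hψ : IsDesingularizing η ψ ψ') : MonotoneOn ψ (Ico 0 η) := by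
  intro r hr s hs hrs
  rcases hrs.eq_or_lt with rfl | hrs
  · rfl
  have := hψ.mul_sub_le_sub hr.1 hrs hs.2
  linarith [mul_pos (hψ.deriv_pos s ⟨hr.1.trans_lt hrs, hs.2⟩) (sub_pos.mpr hrs)]

theorem nonneg (hψ : IsDesingularizing η ψ ψ') {s : ℝ} (hs₀ : 0 ≤ s) (hs : s < η) : 0 ≤ ψ s :=
  hψ.map_zero ▸ hψ.monotoneOn ⟨le_rfl, hψ.pos⟩ ⟨hs₀, hs⟩ hs₀

theorem le_div_mul_sub (hψ : IsDesingularizing η ψ ψ') {a b Δ Δ' s G : ℝ} (ha : 0 < a)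
    (hb : 0 ≤ b) (hΔ' : 0 ≤ Δ') (hΔ : Δ < η) (hs : 0 ≤ s) (hdecr : a * s ^ 2 ≤ Δ - Δ')
    (hG : G ≤ b * s) (hKL : 0 < Δ → 1 ≤ ψ' Δ * G) :
    s ≤ b / a * (ψ Δ - ψ Δ') := by
  have hΔ'Δ : Δ' ≤ Δ := by linarith [show 0 ≤ a * s ^ 2 by positivity]
  rcases hs.eq_or_lt with rfl | hs
  · exact mul_nonneg (div_nonneg hb ha.le)
      (sub_nonneg.mpr (hψ.monotoneOn ⟨hΔ', hΔ'Δ.trans_lt hΔ⟩ ⟨hΔ'.trans hΔ'Δ, hΔ⟩ hΔ'Δ))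
  have hlt : Δ' < Δ := by linarith [show 0 < a * s ^ 2 by positivity]
  have hψ' := hψ.deriv_pos Δ ⟨hΔ'.trans_lt hlt, hΔ⟩
  have hdrop := hψ.mul_sub_le_sub hΔ' hlt hΔ
  have hslope : 1 ≤ ψ' Δ * (b * s) := (hKL (hΔ'.trans_lt hlt)).trans (by gcongr)
  rw [div_mul_eq_mul_div, le_div_iff₀ ha]
  calc s * a ≤ s * a * (ψ' Δ * (b * s)) := le_mul_of_one_le_right (by positivity) hslope
    _ = b * (ψ' Δ * (a * s ^ 2)) := by ring
    _ ≤ b * (ψ' Δ * (Δ - Δ')) := by gcongr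
    _ ≤ b * (ψ Δ - ψ Δ') := by gcongr

end IsDesingularizing

theorem summable_dist_of_dist_le_sub_of_mem_ball {X : Type*} [PseudoMetricSpace X] {x : ℕ → X}
    {u : ℕ → ℝ} {c : X} {ρ : ℝ} (hu : ∀ k, 0 ≤ u k)
    (hstep : ∀ k, x k ∈ Metric.ball c ρ → dist (x k) (x (k + 1)) ≤ u k - u (k + 1))
    (h₀ : dist (x 0) c + u 0 < ρ) :
    Summable fun k => dist (x k) (x (k + 1)) := by
  have hpartial : ∀ m, ∑ i ∈ Finset.range m, dist (x i) (x (i + 1)) + u m ≤ u 0 := by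
    intro m
    induction m with
    | zero => simp
    | succ m ih =>
      have hm : x m ∈ Metric.ball c ρ := by
        have := dist_le_range_sum_dist x m
        rw [Metric.mem_ball]
        linarith [dist_triangle (x m) (x 0) c, dist_comm (x 0) (x m), hu m]
      rw [Finset.sum_range_succ]
      linarith [hstep m hm]
  exact summable_of_sum_range_le (c := u 0) (fun _ => dist_nonneg) fun m => by
    linarith [hpartial m, hu m]

theorem summable_dist_of_isDesingularizing {X : Type*} [PseudoMetricSpace X] {f G : X → ℝ}
    {x : ℕ → X} {xbar : X} {a b η : ℝ} {U : Set X} {ψ ψ' : ℝ → ℝ} (ha : 0 < a) (hb : 0 ≤ b)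
    (hdescent : ∀ k, a * dist (x k) (x (k + 1)) ^ 2 ≤ f (x k) - f (x (k + 1)))
    (hrel : ∀ k, G (x k) ≤ b * dist (x k) (x (k + 1)))
    (hclus : MapClusterPt xbar atTop x) (hlim : Tendsto (fun k => f (x k)) atTop (𝓝 (f xbar)))
    (hψ : IsDesingularizing η ψ ψ') (hU : U ∈ 𝓝 xbar)
    (hKL : ∀ y ∈ U, f xbar < f y → f y < f xbar + η → 1 ≤ ψ' (f y - f xbar) * G y) :
    Summable fun k => dist (x k) (x (k + 1)) := by
  set Δ := fun k => f (x k) - f xbar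
  have hanti : Antitone Δ := antitone_nat_of_succ_le fun k => by
    linarith [hdescent k, mul_nonneg ha.le (sq_nonneg (dist (x k) (x (k + 1))))]
  have hΔ : Tendsto Δ atTop (𝓝 0) := by simpa using hlim.sub_const (f xbar)
  have hΔ₀ : ∀ k, 0 ≤ Δ k := hanti.le_of_tendsto hΔ
  have hψΔ : Tendsto (fun k => b / a * ψ (Δ k)) atTop (𝓝 0) := by
    have hcont := (hψ.continuousOn 0 ⟨le_rfl, hψ.pos⟩).tendsto
    rw [hψ.map_zero] at hcont
    simpa using (hcont.comp (tendsto_nhdsWithin_iff.mpr ⟨hΔ,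
      (hΔ.eventually (Iio_mem_nhds hψ.pos)).mono fun k hk => ⟨hΔ₀ k, hk⟩⟩)).const_mul (b / a)
  obtain ⟨ρ, hρ, hball⟩ := Metric.mem_nhds_iff.mp hU
  have hlate : ∀ᶠ k in atTop, Δ k < η ∧ b / a * ψ (Δ k) < ρ / 2 :=
    (hΔ.eventually_lt_const hψ.pos).and (hψΔ.eventually_lt_const (half_pos hρ))
  -- From a late visit `k₀` of `ball xbar (ρ / 2)` on, the potential `(b / a) ψ(Δ k)` is below
  -- `ρ / 2`, which keeps the iterates in `ball xbar ρ ⊆ U`.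
  obtain ⟨k₀, hk₀, hlate⟩ :=
    ((hclus.frequently (Metric.ball_mem_nhds xbar (half_pos hρ))).and_eventually
      (eventually_forall_ge_atTop.mpr hlate)).exists
  have hshift : Summable fun k => dist (x (k₀ + k)) (x (k₀ + k + 1)) := by
    refine summable_dist_of_dist_le_sub_of_mem_ball (u := fun k => b / a * ψ (Δ (k₀ + k)))
      (c := xbar) (ρ := ρ) (fun k => ?_) (fun k hk => ?_) ?_
    · exact mul_nonneg (div_nonneg hb ha.le) (hψ.nonneg (hΔ₀ _) (hlate _ le_self_add).1)
    · rw [← mul_sub]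
      have hη := (hlate (k₀ + k) le_self_add).1
      exact hψ.le_div_mul_sub ha hb (hΔ₀ _) hη dist_nonneg
        ((hdescent _).trans_eq (sub_sub_sub_cancel_right _ _ _).symm) (hrel _)
        fun hpos => hKL _ (hball hk) (sub_pos.mp hpos) (sub_lt_iff_lt_add'.mp hη)
    · show dist (x k₀) xbar + b / a * ψ (Δ k₀) < ρ
      linarith [Metric.mem_ball.mp hk₀, (hlate k₀ le_rfl).2]
  exact (summable_nat_add_iff k₀).mp (by simpa only [add_comm k₀] using hshift)

theorem exists_mapClusterPt_tendsto_of_antitone {X : Type*} [PseudoMetricSpace X] [ProperSpace X]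
    {f : X → ℝ} (hf : Continuous f) {x : ℕ → X} (hx : Bornology.IsBounded (range x))
    (hanti : Antitone fun k => f (x k)) :
    ∃ xbar, MapClusterPt xbar atTop x ∧ Tendsto (fun k => f (x k)) atTop (𝓝 (f xbar)) := by
  obtain ⟨xbar, -, φ, hφ, hlim⟩ := tendsto_subseq_of_bounded hx mem_range_self
  exact ⟨xbar, hlim.mapClusterPt.of_comp hφ.tendsto_atTop,
    (tendsto_iff_tendsto_subseq_of_antitone hanti hφ.tendsto_atTop).mpr
      ((hf.tendsto xbar).comp hlim)⟩

theorem eq_zero_of_norm_le_mul_dist_succ {X F : Type*} [PseudoMetricSpace X]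
    [NormedAddCommGroup F] {G : X → F} {x : ℕ → X} {xt : X} {b : ℝ} (hG : ContinuousAt G xt)
    (hx : Tendsto x atTop (𝓝 xt)) (hrel : ∀ k, ‖G (x k)‖ ≤ b * dist (x k) (x (k + 1))) :
    G xt = 0 := by
  have hdist : Tendsto (fun k => dist (x k) (x (k + 1))) atTop (𝓝 0) := by
    simpa using hx.dist (hx.comp (tendsto_add_atTop_nat 1))
  exact tendsto_nhds_unique (hG.tendsto.comp hx)
    (squeeze_zero_norm hrel (by simpa using hdist.const_mul b))

section InnerProductSpace

variable {E : Type*} [NormedAddCommGroup E] [InnerProductSpace ℝ E] [CompleteSpace E]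

theorem ContDiff.gradient {f : E → ℝ} {m n : WithTop ℕ∞} (hf : ContDiff ℝ n f)
    (hmn : m + 1 ≤ n) : ContDiff ℝ m (gradient f) :=
  (InnerProductSpace.toDual ℝ E).symm.contDiff.comp (hf.fderiv_right hmn)

theorem ConvexOn.nonneg_of_hasDerivAt_of_hasDerivAt {q q' : ℝ → ℝ} {q'' x : ℝ}
    (hq : ConvexOn ℝ univ q) (hq' : ∀ s, HasDerivAt q (q' s) s) (hq'' : HasDerivAt q' q'' x) :
    0 ≤ q'' := by
  have hmono := hq.monotoneOn_deriv fun s _ => (hq' s).differentiableAt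
  rw [funext fun s => (hq' s).deriv, monotoneOn_univ] at hmono
  exact hq''.nonneg_of_monotone hmono

theorem le_inner_fderiv_gradient_of_convexOn_sub {φ : E → ℝ} {σ : ℝ} (hφ : ContDiff ℝ 2 φ)
    (hconv : ConvexOn ℝ univ fun y => φ y - σ / 2 * ‖y‖ ^ 2) (x v : E) :
    σ * ‖v‖ ^ 2 ≤ ⟪fderiv ℝ (gradient φ) x v, v⟫ := by
  -- The convex slice `s ↦ φ (x + s v) - σ/2 ‖x + s v‖²` has second derivative
  -- `⟪∇²φ(x) v, v⟫ - σ ‖v‖²` at `0`.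
  set c : ℝ → E := ⇑(AffineMap.lineMap (k := ℝ) x (x + v))
  have hc : ∀ s, HasDerivAt c v s := fun s => by
    simpa using AffineMap.hasDerivAt_lineMap (a := x) (b := x + v) (x := s)
  have hslice : ConvexOn ℝ univ fun s => φ (c s) - σ / 2 * ‖c s‖ ^ 2 :=
    hconv.comp_affineMap (AffineMap.lineMap x (x + v))
  have hφ' : ∀ s, HasDerivAt (fun s => φ (c s)) ⟪gradient φ (c s), v⟫ s := fun s => by
    rw [inner_gradient_left]
    exact ((hφ.differentiable (by norm_num)) (c s)).hasFDerivAt.comp_hasDerivAt s (hc s)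
  have hslope : HasDerivAt (fun s => ⟪gradient φ (c s), v⟫ - σ * ⟪c s, v⟫)
      (⟪fderiv ℝ (gradient φ) x v, v⟫ - σ * ‖v‖ ^ 2) 0 := by
    have hgrad := ((hφ.gradient (m := 1) (by norm_num)).differentiable (by norm_num)
      (c 0)).hasFDerivAt.comp_hasDerivAt 0 (hc 0)
    refine ((hgrad.inner ℝ (hasDerivAt_const 0 v)).sub
      (((hc 0).inner ℝ (hasDerivAt_const 0 v)).const_mul σ)).congr_deriv ?_
    simp [c]
  have hsq : ∀ s, HasDerivAt (fun s => σ / 2 * ‖c s‖ ^ 2) (σ * ⟪c s, v⟫) s := fun s => by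
    refine ((hc s).norm_sq.const_mul (σ / 2)).congr_deriv ?_
    rw [real_inner_comm]; ring
  have := hslice.nonneg_of_hasDerivAt_of_hasDerivAt (fun s => (hφ' s).sub (hsq s)) hslope
  linarith

theorem abpg_step_descent {f φ : E → ℝ} {σ lam α τ : ℝ} {y v : E} (hφ : ContDiff ℝ 2 φ)
    (hφsc : ConvexOn ℝ univ fun y => φ y - σ / 2 * ‖y‖ ^ 2) (hσ : 0 ≤ σ) (hlam : 0 < lam)
    (hα : 0 ≤ α) (hτ : τ ∈ Icc (0 : ℝ) 1)
    (hdec : f (y + τ • v) ≤ f y - α * τ / (2 * lam) * ⟪fderiv ℝ (gradient φ) y v, v⟫) :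
    α * σ / (2 * lam) * ‖τ • v‖ ^ 2 ≤ f y - f (y + τ • v) := by
  have hH := le_inner_fderiv_gradient_of_convexOn_sub hφ hφsc y v
  have hττ : τ * τ ≤ τ := mul_le_of_le_one_left hτ.1 hτ.2
  rw [norm_smul, Real.norm_of_nonneg hτ.1]
  calc α * σ / (2 * lam) * (τ * ‖v‖) ^ 2 = α / (2 * lam) * (τ * τ * (σ * ‖v‖ ^ 2)) := by ring
    _ ≤ α / (2 * lam) * (τ * ⟪fderiv ℝ (gradient φ) y v, v⟫) :=
      mul_le_mul_of_nonneg_left (mul_le_mul hττ hH (by positivity) hτ.1) (by positivity)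
    _ = α * τ / (2 * lam) * ⟪fderiv ℝ (gradient φ) y v, v⟫ := by ring
    _ ≤ f y - f (y + τ • v) := by linarith

theorem abpg_step_norm_gradient_le {f : E → ℝ} {A : E →L[ℝ] E} {lam tmin τ C : ℝ} {y v : E}
    (hlam : 0 < lam) (htmin : 0 < tmin) (hτ : tmin ≤ τ) (hA : ‖A‖ ≤ C)
    (hopt : gradient f y + (1 / lam) • A v = 0) :
    ‖gradient f y‖ ≤ C / (lam * tmin) * ‖τ • v‖ := by
  rw [eq_neg_of_add_eq_zero_left hopt, norm_neg, norm_smul, norm_smul,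
    Real.norm_of_nonneg (by positivity), Real.norm_of_nonneg (htmin.le.trans hτ)]
  calc 1 / lam * ‖A v‖ ≤ 1 / lam * (C * ‖v‖) := by gcongr; exact A.le_of_opNorm_le hA v
    _ = C / (lam * tmin) * (tmin * ‖v‖) := by field_simp
    _ ≤ C / (lam * tmin) * (τ * ‖v‖) := by
      have : 0 ≤ C := (norm_nonneg A).trans hA
      gcongr

end InnerProductSpace

theorem abpg_global_convergence_general {n : ℕ}
    (φ f : EuclideanSpace ℝ (Fin n) → ℝ) (σ : ℝ) (hσ : 0 < σ)
    (hφ : ContDiff ℝ 2 φ)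
    (hφsc : ConvexOn ℝ Set.univ (fun y => φ y - σ / 2 * ‖y‖ ^ 2))
    (hf : ContDiff ℝ 1 f)
    (hlevel : ∀ r : ℝ, Bornology.IsBounded {y | f y ≤ r})
    (lam : ℝ) (hlam : 0 < lam) (α : ℝ) (hα : α ∈ Set.Ioo (0 : ℝ) 1)
    (tmin : ℝ) (htmin : tmin ∈ Set.Ioc (0 : ℝ) 1)
    (x d : ℕ → EuclideanSpace ℝ (Fin n)) (t : ℕ → ℝ)
    (ht : ∀ k, t k ∈ Set.Icc tmin 1)
    (hopt : ∀ k, gradient f (x k) + (1 / lam) • hessApply φ (x k) (d k) = 0)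
    (hupd : ∀ k, x (k + 1) = x k + t k • d k)
    (hdec : ∀ k, f (x (k + 1)) ≤
      f (x k) - α * t k / (2 * lam) * ⟪hessApply φ (x k) (d k), d k⟫)
    (hKL : ∀ xbar : EuclideanSpace ℝ (Fin n), ∃ η : ℝ, 0 < η ∧
      ∃ U ∈ nhds xbar, ∃ ψ ψ' : ℝ → ℝ,
        ContinuousOn ψ (Set.Ico 0 η) ∧ ConcaveOn ℝ (Set.Ico 0 η) ψ ∧ ψ 0 = 0 ∧
        (∀ s ∈ Set.Ioo (0 : ℝ) η, HasDerivAt ψ (ψ' s) s ∧ 0 < ψ' s) ∧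
        ContinuousOn ψ' (Set.Ioo (0 : ℝ) η) ∧
        ∀ y ∈ U, f xbar < f y → f y < f xbar + η →
          1 ≤ ψ' (f y - f xbar) * ‖gradient f y‖) :
    Summable (fun k => ‖x (k + 1) - x k‖) ∧
      ∃ xtilde : EuclideanSpace ℝ (Fin n),
        Filter.Tendsto x Filter.atTop (nhds xtilde) ∧ gradient f xtilde = 0 := by
  obtain ⟨hα₀, -⟩ := hα
  obtain ⟨htmin₀, -⟩ := htmin
  have ha : 0 < α * σ / (2 * lam) := by positivity
  have hdescent : ∀ k, α * σ / (2 * lam) * dist (x k) (x (k + 1)) ^ 2 ≤ f (x k) - f (x (k + 1)) :=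
    fun k => by
      rw [hupd, dist_self_add_right]
      exact abpg_step_descent hφ hφsc hσ.le hlam hα₀.le ⟨htmin₀.le.trans (ht k).1, (ht k).2⟩
        (hupd k ▸ hdec k)
  have hanti : Antitone fun k => f (x k) := antitone_nat_of_succ_le fun k => by
    linarith [hdescent k, mul_nonneg ha.le (sq_nonneg (dist (x k) (x (k + 1))))]
  have hsub : ∀ k, x k ∈ {y | f y ≤ f (x 0)} := fun k => hanti k.zero_le
  obtain ⟨C, hC⟩ := (hlevel (f (x 0))).isCompact_closure.exists_bound_of_continuousOn
    ((hφ.gradient (m := 1) (by norm_num)).continuous_fderiv one_ne_zero).continuousOn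
  have hrel : ∀ k, ‖gradient f (x k)‖ ≤ C / (lam * tmin) * dist (x k) (x (k + 1)) := fun k => by
    rw [hupd, dist_self_add_right]
    exact abpg_step_norm_gradient_le hlam htmin₀ (ht k).1 (hC _ (subset_closure (hsub k))) (hopt k)
  have hb : 0 ≤ C / (lam * tmin) := by
    have := (norm_nonneg _).trans (hC _ (subset_closure (hsub 0)))
    positivity
  obtain ⟨xbar, hclus, hlim⟩ := exists_mapClusterPt_tendsto_of_antitone hf.continuous
    ((hlevel _).subset (range_subset_iff.mpr hsub)) hanti
  obtain ⟨η, hη, U, hU, ψ, ψ', hψc, hψconc, hψ0, hψd, -, hKLxbar⟩ := hKL xbar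
  have hsum := summable_dist_of_isDesingularizing ha hb hdescent hrel hclus hlim
    ⟨hη, hψc, hψconc, hψ0, fun s hs => (hψd s hs).1, fun s hs => (hψd s hs).2⟩ hU hKLxbar
  obtain ⟨xt, hxt⟩ := cauchySeq_tendsto_of_complete (cauchySeq_of_summable_dist hsum)
  exact ⟨by simpa only [dist_eq_norm'] using hsum, xt, hxt,
    eq_zero_of_norm_le_mul_dist_succ
      ((hf.gradient (m := 0) (by norm_num)).continuous.continuousAt) hxt hrel⟩

theorem abpg_global_convergence {n : ℕ}
    (φ f : EuclideanSpace ℝ (Fin n) → ℝ) (σ : ℝ) (hσ : 0 < σ)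
    (hφ : ContDiff ℝ 2 φ)
    (hφsc : ConvexOn ℝ Set.univ (fun y => φ y - σ / 2 * ‖y‖ ^ 2))
    (hf : ContDiff ℝ 1 f)
    (hbdd : BddBelow (Set.range f))
    (hlevel : ∀ r : ℝ, Bornology.IsBounded {y | f y ≤ r})
    (hlip : ∀ s : Set (EuclideanSpace ℝ (Fin n)), Bornology.IsBounded s →
      ∃ K : ℝ≥0, LipschitzOnWith K (gradient f) s)
    (lam : ℝ) (hlam : 0 < lam) (α : ℝ) (hα : α ∈ Set.Ioo (0 : ℝ) 1)
    (tmin : ℝ) (htmin : tmin ∈ Set.Ioc (0 : ℝ) 1)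
    (x d : ℕ → EuclideanSpace ℝ (Fin n)) (t : ℕ → ℝ)
    (ht : ∀ k, t k ∈ Set.Icc tmin 1)
    (hopt : ∀ k, gradient f (x k) + (1 / lam) • hessApply φ (x k) (d k) = 0)
    (hupd : ∀ k, x (k + 1) = x k + t k • d k)
    (hdec : ∀ k, f (x (k + 1)) ≤
      f (x k) - α * t k / (2 * lam) * ⟪hessApply φ (x k) (d k), d k⟫)
    (hKL : ∀ xbar : EuclideanSpace ℝ (Fin n), ∃ η : ℝ, 0 < η ∧
      ∃ U ∈ nhds xbar, ∃ ψ ψ' : ℝ → ℝ,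
        ContinuousOn ψ (Set.Ico 0 η) ∧ ConcaveOn ℝ (Set.Ico 0 η) ψ ∧ ψ 0 = 0 ∧
        (∀ s ∈ Set.Ioo (0 : ℝ) η, HasDerivAt ψ (ψ' s) s ∧ 0 < ψ' s) ∧
        ContinuousOn ψ' (Set.Ioo (0 : ℝ) η) ∧
        ∀ y ∈ U, f xbar < f y → f y < f xbar + η →
          1 ≤ ψ' (f y - f xbar) * ‖gradient f y‖) :
    Summable (fun k => ‖x (k + 1) - x k‖) ∧
      ∃ xtilde : EuclideanSpace ℝ (Fin n),
        Filter.Tendsto x Filter.atTop (nhds xtilde) ∧ gradient f xtilde = 0 :=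
  abpg_global_convergence_general φ f σ hσ hφ hφsc hf hlevel lam hlam α hα tmin htmin x d t ht hopt
    hupd hdec hKL
end

section
/- Consider an ABPG sequence with g ≡ 0 (see context) converging to a point x̃ with ∇f(x̃) = 0, and assume f satisfies the KL inequality at x̃ with exponent θ ∈ (1/2, 1): there exist c > 0, ε > 0, η > 0 such that |f(x) − f(x̃)|^θ ≤ c(1 − θ)‖∇f(x)‖ for all x with ‖x − x̃‖ < ε and f(x̃) < f(x) < f(x̃) + η. Then there exists c₂ > 0 such that ‖x^k − x̃‖ ≤ c₂·k^{−(1−θ)/(2θ−1)} for all k ≥ 1. -/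
/-!
With `rₖ = f(xᵏ) - f(x̃)`, sufficient decrease gives `β‖dᵏ‖² ≤ rₖ - rₖ₊₁`, and the optimality
condition together with the local boundedness of `∇²φ` gives `‖∇f(xᵏ)‖ ≤ L‖dᵏ‖` near `x̃`, so the
KL inequality becomes `rₖ^θ ≤ C‖dᵏ‖`. Hence `rₖ^(2θ) ≤ C'(rₖ - rₖ₊₁)`, so `rₖ^(-(2θ-1))` grows at
least linearly and `rₖ = O(k^(-1/(2θ-1)))`. Concavity of `s ↦ s^(1-θ)` turns the same two
inequalities into `‖dᵏ‖ ≤ C''(rₖ^(1-θ) - rₖ₊₁^(1-θ))`, and telescoping gives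
`‖xᵏ - x̃‖ ≤ C'' rₖ^(1-θ) = O(k^(-(1-θ)/(2θ-1)))`.
-/

open scoped RealInnerProductSpace NNReal

open Filter Topology Asymptotics Real

lemma mul_rpow_sub_one_mul_sub_le_rpow_sub_rpow {q a b : ℝ} (hq0 : 0 ≤ q) (hq1 : q ≤ 1)
    (ha : 0 < a) (hb : 0 ≤ b) : q * a ^ (q - 1) * (a - b) ≤ a ^ q - b ^ q := by
  have h := rpow_one_add_le_one_add_mul_self (s := b / a - 1)
    (by linarith [div_nonneg hb ha.le]) hq0 hq1
  rw [add_sub_cancel, div_rpow hb ha.le, div_le_iff₀ (rpow_pos_of_pos ha q)] at h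
  have : (1 + q * (b / a - 1)) * a ^ q = a ^ q - q * (a ^ q / a) * (a - b) := by
    field_simp; ring
  rw [rpow_sub_one ha.ne']
  linarith

lemma rpow_neg_add_div_le_rpow_neg {p C A B : ℝ} (hp0 : 0 < p) (hp1 : p ≤ 1) (hC : 0 < C)
    (hB : 0 < B) (hBA : B ≤ A) (hrec : A ^ (p + 1) ≤ C * (A - B)) :
    A ^ (-p) + p / C ≤ B ^ (-p) := by
  have hA : 0 < A := hB.trans_le hBA
  have ha : 0 < A ^ p := rpow_pos_of_pos hA p
  have hb : 0 < B ^ p := rpow_pos_of_pos hB p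
  have hba : B ^ p ≤ A ^ p := rpow_le_rpow hB.le hBA hp0.le
  have hgap : p / C * (A ^ p * A ^ p) ≤ A ^ p - B ^ p := calc
    p / C * (A ^ p * A ^ p) = p * A ^ (p - 1) * (A ^ (p + 1) / C) := by
      rw [rpow_sub_one hA.ne', rpow_add_one hA.ne']; field_simp
    _ ≤ p * A ^ (p - 1) * (A - B) := by gcongr; rwa [div_le_iff₀' hC]
    _ ≤ A ^ p - B ^ p := mul_rpow_sub_one_mul_sub_le_rpow_sub_rpow hp0.le hp1 hA hB.le
  rw [rpow_neg hA.le, rpow_neg hB.le, inv_eq_one_div, inv_eq_one_div, div_add' _ _ _ ha.ne',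
    div_le_div_iff₀ ha hb]
  nlinarith [mul_le_mul_of_nonneg_left hba (by positivity : 0 ≤ p / C * A ^ p)]

lemma sub_mul_div_le_rpow_neg {r : ℕ → ℝ} {p C : ℝ} {K : ℕ} (hp0 : 0 < p) (hp1 : p ≤ 1)
    (hC : 0 < C) (hr : Antitone r) (hrec : ∀ k ≥ K, r k ^ (p + 1) ≤ C * (r k - r (k + 1))) :
    ∀ k ≥ K, 0 < r k → ((k : ℝ) - K) * (p / C) ≤ r k ^ (-p) := by
  intro k hk
  induction k, hk using Nat.le_induction with
  | base => intro hpos; simpa using (rpow_pos_of_pos hpos _).le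
  | succ k hk ih =>
    intro hpos
    have hstep := rpow_neg_add_div_le_rpow_neg hp0 hp1 hC hpos (hr k.le_succ) (hrec k hk)
    push_cast
    linarith [ih (hpos.trans_le (hr k.le_succ))]

lemma isBigO_rpow_neg_inv_of_rpow_add_one_le {r : ℕ → ℝ} {p C : ℝ} (hp0 : 0 < p) (hp1 : p ≤ 1)
    (hC : 0 < C) (hr0 : ∀ k, 0 ≤ r k) (hr : Antitone r)
    (hrec : ∀ᶠ k in atTop, r k ^ (p + 1) ≤ C * (r k - r (k + 1))) :
    r =O[atTop] fun k => (k : ℝ) ^ (-p⁻¹) := by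
  obtain ⟨K, hK⟩ := eventually_atTop.1 hrec
  refine IsBigO.of_bound ((p / (2 * C)) ^ (-p⁻¹)) ?_
  filter_upwards [eventually_ge_atTop (2 * K + 1)] with k hk
  have hk0 : (0 : ℝ) < k := by exact_mod_cast (show 0 < k by omega)
  rw [norm_of_nonneg (hr0 k), norm_of_nonneg (by positivity), ← mul_rpow (by positivity) hk0.le]
  rcases (hr0 k).eq_or_lt with h0 | hpos
  · rw [← h0]; positivity
  have hlin : p / (2 * C) * k ≤ r k ^ (-p) := calc
    p / (2 * C) * k = (k / 2) * (p / C) := by ring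
    _ ≤ ((k : ℝ) - K) * (p / C) := by
      have : (2 * K + 1 : ℝ) ≤ k := by exact_mod_cast hk
      gcongr; linarith
    _ ≤ r k ^ (-p) := sub_mul_div_le_rpow_neg hp0 hp1 hC hr hK k (by omega) hpos
  calc r k = (r k ^ (-p)) ^ (-p⁻¹) := by
        rw [← rpow_mul hpos.le, neg_mul_neg, mul_inv_cancel₀ hp0.ne', rpow_one]
    _ ≤ (p / (2 * C) * k) ^ (-p⁻¹) :=
        rpow_le_rpow_of_nonpos (by positivity) hlin (by simp [hp0.le])

lemma le_mul_rpow_sub_rpow_of_rpow_le {θ β c r r' s : ℝ} (hθ0 : 0 ≤ θ) (hθ1 : θ < 1)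
    (hβ : 0 < β) (hc : 0 < c) (hr' : 0 ≤ r') (hs : 0 ≤ s) (hdesc : β * s ^ 2 ≤ r - r')
    (hKL : r ^ θ ≤ c * s) : s ≤ c / (β * (1 - θ)) * (r ^ (1 - θ) - r' ^ (1 - θ)) := by
  have h1θ : 0 < 1 - θ := by linarith
  rcases hs.eq_or_lt with rfl | hs
  · have : r' ^ (1 - θ) ≤ r ^ (1 - θ) := rpow_le_rpow hr' (by nlinarith) h1θ.le
    have : 0 ≤ c / (β * (1 - θ)) := by positivity
    nlinarith
  have hr : 0 < r := by nlinarith [mul_pos hβ (pow_pos hs 2)]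
  calc s = c / (β * (1 - θ)) * ((1 - θ) * (c * s)⁻¹ * (β * s ^ 2)) := by field_simp
    _ ≤ c / (β * (1 - θ)) * ((1 - θ) * r ^ (-θ) * (r - r')) := by
      gcongr
      rw [rpow_neg hr.le]
      exact inv_anti₀ (rpow_pos_of_pos hr θ) hKL
    _ ≤ c / (β * (1 - θ)) * (r ^ (1 - θ) - r' ^ (1 - θ)) := by
      gcongr
      simpa using mul_rpow_sub_one_mul_sub_le_rpow_sub_rpow h1θ.le (by linarith) hr hr'

lemma dist_le_of_dist_succ_le_sub {X : Type*} [PseudoMetricSpace X] {x : ℕ → X} {a : X}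
    {v : ℕ → ℝ} {K : ℕ} (hx : Tendsto x atTop (𝓝 a)) (hv : ∀ k, 0 ≤ v k)
    (h : ∀ k ≥ K, dist (x k) (x (k + 1)) ≤ v k - v (k + 1)) : ∀ k ≥ K, dist (x k) a ≤ v k := by
  intro k hk
  have htel : ∀ N ≥ k, dist (x k) (x N) ≤ v k - v N := by
    intro N hN
    induction N, hN using Nat.le_induction with
    | base => simp
    | succ N hN ih =>
      linarith [dist_triangle (x k) (x N) (x (N + 1)), h N (hk.trans hN)]
  refine le_of_tendsto (tendsto_const_nhds.dist hx) ?_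
  filter_upwards [eventually_ge_atTop k] with N hN
  linarith [htel N hN, hv N]

lemma exists_forall_le_mul_rpow_of_isBigO {u : ℕ → ℝ} {e : ℝ}
    (h : u =O[atTop] fun k => (k : ℝ) ^ e) :
    ∃ c₂ : ℝ, 0 < c₂ ∧ ∀ k : ℕ, 1 ≤ k → u k ≤ c₂ * (k : ℝ) ^ e := by
  obtain ⟨c, hc⟩ := isBigO_principal.1 <| h.nat_of_atTop (l := 𝓟 {k | 1 ≤ k}) <|
    eventually_principal.2 fun k hk hk0 =>
      absurd hk0 (rpow_pos_of_pos (Nat.cast_pos.2 hk) e).ne'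
  refine ⟨max c 1, by positivity, fun k hk => ?_⟩
  have hke : 0 ≤ (k : ℝ) ^ e := by positivity
  calc u k ≤ c * ‖(k : ℝ) ^ e‖ := (le_norm_self _).trans (hc k hk)
    _ ≤ max c 1 * (k : ℝ) ^ e := by rw [norm_of_nonneg hke]; gcongr; exact le_max_left _ _

theorem isBigO_dist_rpow_of_KL {X : Type*} [PseudoMetricSpace X] {x : ℕ → X} {a : X}
    {r s : ℕ → ℝ} {β c θ : ℝ} (hβ : 0 < β) (hc : 0 < c) (hθ : θ ∈ Set.Ioo (1 / 2 : ℝ) 1)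
    (hx : Tendsto x atTop (𝓝 a)) (hr0 : ∀ k, 0 ≤ r k) (hr : Antitone r)
    (h : ∀ᶠ k in atTop, β * s k ^ 2 ≤ r k - r (k + 1) ∧ r k ^ θ ≤ c * s k ∧
      dist (x k) (x (k + 1)) ≤ s k) :
    (fun k => dist (x k) a) =O[atTop] fun k => (k : ℝ) ^ (-((1 - θ) / (2 * θ - 1))) := by
  obtain ⟨hθ0, hθ1⟩ := hθ
  have hp : 0 < 2 * θ - 1 := by linarith
  have hq : 0 < 1 - θ := by linarith
  have hrec : ∀ᶠ k in atTop, r k ^ (2 * θ - 1 + 1) ≤ c ^ 2 / β * (r k - r (k + 1)) := by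
    filter_upwards [h] with k ⟨hdesc, hKL, _⟩
    calc r k ^ (2 * θ - 1 + 1) = (r k ^ θ) ^ 2 := by
          rw [← rpow_natCast, ← rpow_mul (hr0 k)]; ring_nf
      _ ≤ (c * s k) ^ 2 := by gcongr; exact rpow_nonneg (hr0 k) θ
      _ ≤ c ^ 2 / β * (r k - r (k + 1)) := by
          rw [div_mul_eq_mul_div, le_div_iff₀ hβ]; nlinarith
  have hrate := isBigO_rpow_neg_inv_of_rpow_add_one_le hp (by linarith) (by positivity) hr0 hr hrec
  obtain ⟨K, hK⟩ := eventually_atTop.1 h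
  have hdist : ∀ k ≥ K, dist (x k) a ≤ c / (β * (1 - θ)) * r k ^ (1 - θ) := by
    refine dist_le_of_dist_succ_le_sub hx (fun k => mul_nonneg (by positivity) ?_) fun k hk => ?_
    · exact rpow_nonneg (hr0 k) _
    obtain ⟨hdesc, hKL, hstep⟩ := hK k hk
    rw [← mul_sub]
    exact hstep.trans <| le_mul_rpow_sub_rpow_of_rpow_le (by linarith) hθ1 hβ hc (hr0 _)
      (dist_nonneg.trans hstep) hdesc hKL
  calc (fun k => dist (x k) a) =O[atTop] fun k => r k ^ (1 - θ) :=
        IsBigO.of_bound (c / (β * (1 - θ))) <| eventually_atTop.2 ⟨K, fun k hk => by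
          rw [norm_of_nonneg dist_nonneg, norm_of_nonneg (rpow_nonneg (hr0 k) _)]
          exact hdist k hk⟩
    _ =O[atTop] fun k => ((k : ℝ) ^ (-(2 * θ - 1)⁻¹)) ^ (1 - θ) :=
        hrate.rpow hq.le (Eventually.of_forall fun k => by positivity)
    _ = fun k : ℕ => (k : ℝ) ^ (-((1 - θ) / (2 * θ - 1))) := by
        funext k; rw [← rpow_mul (Nat.cast_nonneg k)]; ring_nf

section

variable {E : Type*} [NormedAddCommGroup E] [InnerProductSpace ℝ E] [CompleteSpace E]

lemma contDiff_gradient {φ : E → ℝ} {n : WithTop ℕ∞} (hφ : ContDiff ℝ (n + 1) φ) :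
    ContDiff ℝ n (gradient φ) :=
  (InnerProductSpace.toDual ℝ E).symm.contDiff.comp (hφ.fderiv_right le_rfl)

lemma mul_norm_sq_le_inner_fderiv_gradient {φ : E → ℝ} {σ : ℝ} (hφ : ContDiff ℝ 2 φ)
    (hsc : ConvexOn ℝ Set.univ (fun y => φ y - σ / 2 * ‖y‖ ^ 2)) (x d : E) :
    σ * ‖d‖ ^ 2 ≤ ⟪fderiv ℝ (gradient φ) x d, d⟫ := by
  have hline : ∀ s : ℝ, HasDerivAt (fun s : ℝ => x + s • d) d s := fun s => by
    simpa using ((hasDerivAt_id s).smul_const d).const_add x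
  set ψ : ℝ → ℝ := fun s => φ (x + s • d) - σ / 2 * ‖x + s • d‖ ^ 2
  set ψ' : ℝ → ℝ := fun s => ⟪gradient φ (x + s • d), d⟫ - σ * ⟪x + s • d, d⟫
  have hψ : ∀ s, HasDerivAt ψ (ψ' s) s := fun s => by
    have h1 := ((hφ.differentiable two_ne_zero _).hasFDerivAt.comp_hasDerivAt s (hline s))
    have h2 := ((hline s).inner ℝ (hline s)).const_mul (σ / 2)
    rw [← inner_gradient_left] at h1
    simp only [real_inner_self_eq_norm_sq] at h2
    exact (h1.sub h2).congr_deriv (by simp only [ψ', real_inner_comm d (x + s • d)]; ring)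
  have hconv : ConvexOn ℝ Set.univ ψ := by
    refine (hsc.comp_affineMap (AffineMap.lineMap x (x + d))).congr fun s _ => ?_
    simp [ψ, AffineMap.lineMap_apply_module', add_comm]
  have hmono : Monotone ψ' := by
    have := hconv.monotoneOn_deriv fun s _ => (hψ s).differentiableAt
    rwa [funext fun s => (hψ s).deriv, monotoneOn_univ] at this
  have hψ' : HasDerivAt ψ' (⟪fderiv ℝ (gradient φ) x d, d⟫ - σ * ‖d‖ ^ 2) 0 := by
    have hG := (contDiff_gradient (n := 1) hφ).differentiable one_ne_zero
    have h1 := ((hG _).hasFDerivAt.comp_hasDerivAt (0 : ℝ) (hline 0)).inner ℝ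
      (hasDerivAt_const (0 : ℝ) d)
    have h2 := ((hline 0).inner ℝ (hasDerivAt_const (0 : ℝ) d)).const_mul σ
    simp only [zero_smul, add_zero, inner_zero_right, zero_add, real_inner_self_eq_norm_sq] at h1 h2
    exact h1.sub h2
  linarith [hψ'.deriv ▸ hmono.deriv_nonneg (x := 0)]

lemma abpg_sufficient_decrease_s13 {φ f : E → ℝ} {σ lam α tmin t : ℝ} {x d x' : E}
    (hσ : 0 ≤ σ) (hφ : ContDiff ℝ 2 φ)
    (hφsc : ConvexOn ℝ Set.univ (fun y => φ y - σ / 2 * ‖y‖ ^ 2))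
    (hlam : 0 < lam) (hα : 0 < α) (htmin : 0 < tmin) (ht : tmin ≤ t)
    (hdec : f x' ≤ f x - α * t / (2 * lam) * ⟪fderiv ℝ (gradient φ) x d, d⟫) :
    α * tmin * σ / (2 * lam) * ‖d‖ ^ 2 ≤ f x - f x' := by
  have := htmin.trans_le ht
  calc α * tmin * σ / (2 * lam) * ‖d‖ ^ 2 = α * tmin / (2 * lam) * (σ * ‖d‖ ^ 2) := by ring
    _ ≤ α * t / (2 * lam) * ⟪fderiv ℝ (gradient φ) x d, d⟫ := by
      gcongr; exact mul_norm_sq_le_inner_fderiv_gradient hφ hφsc x d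
    _ ≤ f x - f x' := by linarith

lemma rpow_sub_le_of_KL {f : E → ℝ} {a y : E} {θ C ε η : ℝ} (hθ : 0 < θ) (hC : 0 ≤ C)
    (hKL : ∀ y, ‖y - a‖ < ε → f a < f y → f y < f a + η →
      |f y - f a| ^ θ ≤ C * ‖gradient f y‖)
    (hyε : ‖y - a‖ < ε) (hay : f a ≤ f y) (hyη : f y < f a + η) :
    (f y - f a) ^ θ ≤ C * ‖gradient f y‖ := by
  rcases hay.eq_or_lt with h | h
  · rw [h, sub_self, zero_rpow hθ.ne']
    positivity
  · simpa [abs_of_pos (sub_pos.2 h)] using hKL y hyε h hyη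

end

lemma exists_eventually_norm_le_mul_norm_of_add_smul_apply_eq_zero {X F : Type*}
    [TopologicalSpace X] [NormedAddCommGroup F] [NormedSpace ℝ F] {H : X → F →L[ℝ] F}
    {x : ℕ → X} {a : X} {g d : ℕ → F} {lam : ℝ} (hlam : 0 < lam) (hH : ContinuousAt H a)
    (hx : Tendsto x atTop (𝓝 a)) (h : ∀ k, g k + (1 / lam) • H (x k) (d k) = 0) :
    ∃ L > 0, ∀ᶠ k in atTop, ‖g k‖ ≤ L * ‖d k‖ := by
  refine ⟨(‖H a‖ + 1) / lam, by positivity, ?_⟩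
  filter_upwards [((hH.norm.tendsto).comp hx).eventually_le_const (lt_add_one _)] with k hk
  rw [eq_neg_of_add_eq_zero_left (h k), norm_neg, norm_smul, norm_of_nonneg (by positivity)]
  calc 1 / lam * ‖H (x k) (d k)‖ ≤ 1 / lam * ((‖H a‖ + 1) * ‖d k‖) := by
        gcongr
        exact ((H (x k)).le_opNorm _).trans (by gcongr; exact hk)
    _ = (‖H a‖ + 1) / lam * ‖d k‖ := by ring

theorem abpg_sublinear_rate_KL_exponent_gt_half_general {n : ℕ}
    (φ f : EuclideanSpace ℝ (Fin n) → ℝ) (σ : ℝ) (hσ : 0 < σ)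
    (hφ : ContDiff ℝ 2 φ)
    (hφsc : ConvexOn ℝ Set.univ (fun y => φ y - σ / 2 * ‖y‖ ^ 2))
    (hf : ContDiff ℝ 1 f)
    (lam : ℝ) (hlam : 0 < lam) (α : ℝ) (hα : α ∈ Set.Ioo (0 : ℝ) 1)
    (tmin : ℝ) (htmin : tmin ∈ Set.Ioc (0 : ℝ) 1)
    (x d : ℕ → EuclideanSpace ℝ (Fin n)) (t : ℕ → ℝ)
    (ht : ∀ k, t k ∈ Set.Icc tmin 1)
    (hopt : ∀ k, gradient f (x k) + (1 / lam) • hessApply φ (x k) (d k) = 0)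
    (hupd : ∀ k, x (k + 1) = x k + t k • d k)
    (hdec : ∀ k, f (x (k + 1)) ≤
      f (x k) - α * t k / (2 * lam) * ⟪hessApply φ (x k) (d k), d k⟫)
    (xtilde : EuclideanSpace ℝ (Fin n))
    (hconv : Filter.Tendsto x Filter.atTop (nhds xtilde))
    (θ : ℝ) (hθ : θ ∈ Set.Ioo (1 / 2 : ℝ) 1)
    (c ε η : ℝ) (hc : 0 < c) (hε : 0 < ε) (hη : 0 < η)
    (hKL : ∀ y : EuclideanSpace ℝ (Fin n), ‖y - xtilde‖ < ε →
      f xtilde < f y → f y < f xtilde + η →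
        |f y - f xtilde| ^ θ ≤ c * (1 - θ) * ‖gradient f y‖) :
    ∃ c₂ : ℝ, 0 < c₂ ∧ ∀ k : ℕ, 1 ≤ k →
      ‖x k - xtilde‖ ≤ c₂ * (k : ℝ) ^ (-((1 - θ) / (2 * θ - 1))) := by
  obtain ⟨hα0, -⟩ := hα
  have hθ1 : 0 < 1 - θ := by linarith [hθ.2]
  set r : ℕ → ℝ := fun k => f (x k) - f xtilde
  set β := α * tmin * σ / (2 * lam)
  have hβ : 0 < β := by have := htmin.1; positivity
  have hdesc : ∀ k, β * ‖d k‖ ^ 2 ≤ r k - r (k + 1) := fun k => by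
    simpa [r] using abpg_sufficient_decrease_s13 hσ.le hφ hφsc hlam hα0 htmin.1 (ht k).1 (hdec k)
  have hr : Antitone r := antitone_nat_of_succ_le fun k => by
    linarith [hdesc k, mul_nonneg hβ.le (sq_nonneg ‖d k‖)]
  have hrlim : Tendsto r atTop (𝓝 0) := by
    simpa using ((hf.continuous.tendsto xtilde).comp hconv).sub_const (f xtilde)
  have hr0 : ∀ k, 0 ≤ r k := hr.le_of_tendsto hrlim
  obtain ⟨L, hL, hrel⟩ := exists_eventually_norm_le_mul_norm_of_add_smul_apply_eq_zero hlam
    ((contDiff_gradient (n := 1) hφ).continuous_fderiv one_ne_zero).continuousAt hconv hopt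
  have hKLseq : ∀ᶠ k in atTop, r k ^ θ ≤ c * (1 - θ) * L * ‖d k‖ := by
    filter_upwards [hrel, (tendsto_iff_norm_sub_tendsto_zero.1 hconv).eventually_lt_const hε,
      hrlim.eventually_lt_const hη] with k hLk hεk hηk
    calc r k ^ θ ≤ c * (1 - θ) * ‖gradient f (x k)‖ :=
          rpow_sub_le_of_KL (by linarith [hθ.1]) (by positivity) hKL hεk
            (by linarith [hr0 k]) (by linarith)
      _ ≤ c * (1 - θ) * L * ‖d k‖ := by rw [mul_assoc _ L]; gcongr
  have hstep : ∀ k, dist (x k) (x (k + 1)) ≤ ‖d k‖ := fun k => by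
    rw [hupd, dist_self_add_right, norm_smul, norm_of_nonneg (htmin.1.trans_le (ht k).1).le]
    exact mul_le_of_le_one_left (norm_nonneg _) (ht k).2
  have hO := isBigO_dist_rpow_of_KL hβ (by positivity) hθ hconv hr0 hr
    (hKLseq.mono fun k hk => ⟨hdesc k, hk, hstep k⟩)
  simpa only [dist_eq_norm] using exists_forall_le_mul_rpow_of_isBigO hO

theorem abpg_sublinear_rate_KL_exponent_gt_half {n : ℕ}
    (φ f : EuclideanSpace ℝ (Fin n) → ℝ) (σ : ℝ) (hσ : 0 < σ)
    (hφ : ContDiff ℝ 2 φ)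
    (hφsc : ConvexOn ℝ Set.univ (fun y => φ y - σ / 2 * ‖y‖ ^ 2))
    (hf : ContDiff ℝ 1 f)
    (hbdd : BddBelow (Set.range f))
    (hlevel : ∀ r : ℝ, Bornology.IsBounded {y | f y ≤ r})
    (hlip : ∀ s : Set (EuclideanSpace ℝ (Fin n)), Bornology.IsBounded s →
      ∃ K : ℝ≥0, LipschitzOnWith K (gradient f) s)
    (lam : ℝ) (hlam : 0 < lam) (α : ℝ) (hα : α ∈ Set.Ioo (0 : ℝ) 1)
    (tmin : ℝ) (htmin : tmin ∈ Set.Ioc (0 : ℝ) 1)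
    (x d : ℕ → EuclideanSpace ℝ (Fin n)) (t : ℕ → ℝ)
    (ht : ∀ k, t k ∈ Set.Icc tmin 1)
    (hopt : ∀ k, gradient f (x k) + (1 / lam) • hessApply φ (x k) (d k) = 0)
    (hupd : ∀ k, x (k + 1) = x k + t k • d k)
    (hdec : ∀ k, f (x (k + 1)) ≤
      f (x k) - α * t k / (2 * lam) * ⟪hessApply φ (x k) (d k), d k⟫)
    (xtilde : EuclideanSpace ℝ (Fin n))
    (hconv : Filter.Tendsto x Filter.atTop (nhds xtilde))
    (hstat : gradient f xtilde = 0)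
    (θ : ℝ) (hθ : θ ∈ Set.Ioo (1 / 2 : ℝ) 1)
    (c ε η : ℝ) (hc : 0 < c) (hε : 0 < ε) (hη : 0 < η)
    (hKL : ∀ y : EuclideanSpace ℝ (Fin n), ‖y - xtilde‖ < ε →
      f xtilde < f y → f y < f xtilde + η →
        |f y - f xtilde| ^ θ ≤ c * (1 - θ) * ‖gradient f y‖) :
    ∃ c₂ : ℝ, 0 < c₂ ∧ ∀ k : ℕ, 1 ≤ k →
      ‖x k - xtilde‖ ≤ c₂ * (k : ℝ) ^ (-((1 - θ) / (2 * θ - 1))) :=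
  abpg_sublinear_rate_KL_exponent_gt_half_general φ f σ hσ hφ hφsc hf lam hlam α hα tmin htmin x d t
    ht hopt hupd hdec xtilde hconv θ hθ c ε η hc hε hη hKL
end

section
/- Let p > 1, θ_p > 0, let A : ℝⁿ → ℝᵐ be a linear map, and let b ∈ ℝᵐ. Define f(x) = (1/2)‖Ax − b‖² + (θ_p/p)∑_{i=1}^n |x_i|^p and φ(x) = (1/2)‖x‖² + (1/p)∑_{i=1}^n |x_i|^p. Then for every L > 0 with L ≥ ‖A‖² + θ_p, where ‖A‖ is the operator norm of A with respect to the Euclidean norms (so that ‖A‖² equals the largest eigenvalue of AᵀA), both functions L·φ − f and L·φ + f are convex on ℝⁿ; that is, the pair (f, φ) is L-smad on ℝⁿ. -/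
/-!
`L φ ± f = ½ (L ‖x‖² ± ‖A x - b‖²) + (L ± θₚ)/p · ∑ |xᵢ|ᵖ`. The separable part is convex since
`L ≥ θₚ` and `t ↦ |t|ᵖ` is convex. For the quadratic part, the identity
`‖s u + t v‖² = s ‖u‖² + t ‖v‖² - s t ‖u - v‖²` (for `s + t = 1`) reduces convexity to
nonnegativity of the quadratic form `L ‖z‖² ± ‖A z‖²`, which holds as `‖A z‖² ≤ ‖A‖² ‖z‖² ≤ L ‖z‖²`.
-/

open Set

theorem ConvexOn.sum {𝕜 E β ι : Type*} [Semiring 𝕜] [PartialOrder 𝕜] [AddCommMonoid E]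
    [AddCommMonoid β] [PartialOrder β] [IsOrderedAddMonoid β] [SMul 𝕜 E] [Module 𝕜 β]
    {s : Set E} (hs : Convex 𝕜 s) (t : Finset ι) {f : ι → E → β}
    (hf : ∀ i ∈ t, ConvexOn 𝕜 s (f i)) : ConvexOn 𝕜 s (∑ i ∈ t, f i) :=
  Finset.sum_induction _ (ConvexOn 𝕜 s) (fun _ _ => ConvexOn.add) (convexOn_const (0 : β) hs) hf

theorem ConvexOn.rpow {E : Type*} [AddCommGroup E] [Module ℝ E] {s : Set E} {f : E → ℝ}
    (hf : ConvexOn ℝ s f) (hf₀ : ∀ x ∈ s, 0 ≤ f x) {p : ℝ} (hp : 1 ≤ p) :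
    ConvexOn ℝ s fun x => f x ^ p := by
  refine ⟨hf.1, fun x hx y hy a b ha hb hab => ?_⟩
  calc f (a • x + b • y) ^ p ≤ (a • f x + b • f y) ^ p :=
        Real.rpow_le_rpow (hf₀ _ (hf.1 hx hy ha hb hab)) (hf.2 hx hy ha hb hab) (by linarith)
    _ ≤ a • f x ^ p + b • f y ^ p := (convexOn_rpow hp).2 (hf₀ x hx) (hf₀ y hy) ha hb hab

theorem convexOn_univ_sum_abs_rpow {ι : Type*} [Fintype ι] {p : ℝ} (hp : 1 ≤ p) :
    ConvexOn ℝ univ fun x : EuclideanSpace ℝ ι => ∑ i, |x i| ^ p := by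
  have habs (i : ι) : ConvexOn ℝ univ fun x : EuclideanSpace ℝ ι => |x i| := by
    simpa [Function.comp_def] using
      (convexOn_univ_norm (E := ℝ)).comp_linearMap (EuclideanSpace.proj i).toLinearMap
  simpa only [Finset.sum_fn] using ConvexOn.sum convex_univ Finset.univ fun i _ =>
    (habs i).rpow (fun x _ => abs_nonneg (x i)) hp

theorem norm_smul_add_smul_sq {E : Type*} [NormedAddCommGroup E] [InnerProductSpace ℝ E]
    (x y : E) {a b : ℝ} (hab : a + b = 1) :
    ‖a • x + b • y‖ ^ 2 = a * ‖x‖ ^ 2 + b * ‖y‖ ^ 2 - a * b * ‖x - y‖ ^ 2 := by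
  rw [norm_add_sq_real, norm_sub_sq_real, norm_smul, norm_smul, real_inner_smul_left,
    real_inner_smul_right, mul_pow, mul_pow, Real.norm_eq_abs, Real.norm_eq_abs, sq_abs, sq_abs]
  obtain rfl := eq_sub_of_add_eq hab
  ring

theorem convexOn_univ_mul_norm_sq_add_mul_norm_sub_sq {E F : Type*} [NormedAddCommGroup E]
    [InnerProductSpace ℝ E] [NormedAddCommGroup F] [InnerProductSpace ℝ F] (A : E →ₗ[ℝ] F)
    (b : F) {L σ : ℝ} (hA : ∀ z, 0 ≤ L * ‖z‖ ^ 2 + σ * ‖A z‖ ^ 2) :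
    ConvexOn ℝ univ fun x => L * ‖x‖ ^ 2 + σ * ‖A x - b‖ ^ 2 := by
  refine ⟨convex_univ, fun x _ y _ s t hs ht hst => ?_⟩
  have hAffine : A (s • x + t • y) - b = s • (A x - b) + t • (A y - b) := by
    conv_lhs => rw [map_add, map_smul, map_smul, ← one_smul ℝ b, ← hst]
    module
  have hDiff : A x - b - (A y - b) = A (x - y) := by
    rw [map_sub, sub_sub_sub_cancel_right]
  simp only [smul_eq_mul]
  rw [hAffine, norm_smul_add_smul_sq x y hst, norm_smul_add_smul_sq _ _ hst, hDiff]
  nlinarith [mul_nonneg (mul_nonneg hs ht) (hA (x - y))]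

theorem convexOn_univ_lp_least_squares {ι F : Type*} [Fintype ι] [NormedAddCommGroup F]
    [InnerProductSpace ℝ F] (A : EuclideanSpace ℝ ι →ₗ[ℝ] F) (b : F) {p θ L σ : ℝ} (hp : 1 ≤ p)
    (hA : ∀ z, 0 ≤ L * ‖z‖ ^ 2 + σ * ‖A z‖ ^ 2) (hθ : 0 ≤ L + σ * θ) :
    ConvexOn ℝ univ fun x : EuclideanSpace ℝ ι =>
      L * ((1 / 2) * ‖x‖ ^ 2 + (1 / p) * ∑ i, |x i| ^ p) +
        σ * ((1 / 2) * ‖A x - b‖ ^ 2 + (θ / p) * ∑ i, |x i| ^ p) := by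
  have hquad := (convexOn_univ_mul_norm_sq_add_mul_norm_sub_sq A b hA).smul
    (by norm_num : (0 : ℝ) ≤ 1 / 2)
  have hsep := (convexOn_univ_sum_abs_rpow (ι := ι) hp).smul
    (div_nonneg hθ (zero_le_one.trans hp))
  refine (hquad.add hsep).congr fun x _ => ?_
  simp only [Pi.add_apply, smul_eq_mul]
  ring

theorem lp_least_squares_Lsmad_general {n m : ℕ} (p θp : ℝ) (hp : 1 < p) (hθp : 0 < θp)
    (A : EuclideanSpace ℝ (Fin n) →L[ℝ] EuclideanSpace ℝ (Fin m))
    (b : EuclideanSpace ℝ (Fin m))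
    (f φ : EuclideanSpace ℝ (Fin n) → ℝ)
    (hfdef : f = fun x => (1 / 2) * ‖A x - b‖ ^ 2 + (θp / p) * ∑ i, |x i| ^ p)
    (hφdef : φ = fun x => (1 / 2) * ‖x‖ ^ 2 + (1 / p) * ∑ i, |x i| ^ p)
    (L : ℝ) (hLge : ‖A‖ ^ 2 + θp ≤ L) :
    ConvexOn ℝ Set.univ (fun x => L * φ x - f x) ∧
      ConvexOn ℝ Set.univ (fun x => L * φ x + f x) := by
  subst hfdef hφdef
  have hAz (z : EuclideanSpace ℝ (Fin n)) : ‖A z‖ ^ 2 ≤ L * ‖z‖ ^ 2 :=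
    calc ‖A z‖ ^ 2 ≤ (‖A‖ * ‖z‖) ^ 2 := by gcongr; exact A.le_opNorm z
      _ = ‖A‖ ^ 2 * ‖z‖ ^ 2 := mul_pow _ _ _
      _ ≤ L * ‖z‖ ^ 2 := by gcongr; linarith
  have hAsq := sq_nonneg ‖A‖
  constructor
  · refine (convexOn_univ_lp_least_squares A.toLinearMap b hp.le (θ := θp) (σ := -1)
      (fun z => by simp only [ContinuousLinearMap.coe_coe]; linarith [hAz z])
      (by linarith)).congr fun x _ => ?_
    simp only [ContinuousLinearMap.coe_coe]
    ring
  · refine (convexOn_univ_lp_least_squares A.toLinearMap b hp.le (θ := θp) (σ := 1)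
      (fun z => by simp only [ContinuousLinearMap.coe_coe]; linarith [hAz z, sq_nonneg ‖A z‖])
      (by linarith)).congr fun x _ => ?_
    simp only [ContinuousLinearMap.coe_coe]
    ring

theorem lp_least_squares_Lsmad {n m : ℕ} (p θp : ℝ) (hp : 1 < p) (hθp : 0 < θp)
    (A : EuclideanSpace ℝ (Fin n) →L[ℝ] EuclideanSpace ℝ (Fin m))
    (b : EuclideanSpace ℝ (Fin m))
    (f φ : EuclideanSpace ℝ (Fin n) → ℝ)
    (hfdef : f = fun x => (1 / 2) * ‖A x - b‖ ^ 2 + (θp / p) * ∑ i, |x i| ^ p)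
    (hφdef : φ = fun x => (1 / 2) * ‖x‖ ^ 2 + (1 / p) * ∑ i, |x i| ^ p)
    (L : ℝ) (hL : 0 < L) (hLge : ‖A‖ ^ 2 + θp ≤ L) :
    ConvexOn ℝ Set.univ (fun x => L * φ x - f x) ∧
      ConvexOn ℝ Set.univ (fun x => L * φ x + f x) :=
  lp_least_squares_Lsmad_general p θp hp hθp A b f φ hfdef hφdef L hLge
end

section
/- Let {a_k}_{k≥0} be a sequence of nonnegative real numbers, let {c_k}_{k≥0} be a nonincreasing sequence of nonnegative real numbers, let C > 0, and let l ≥ 1 be an index such that a_k² ≤ C(c_k − c_{k+1})·a_{k−1} for all k ≥ l. Then the series ∑_{k≥l} a_k converges, and ∑_{k=l}^∞ a_k ≤ C·c_l + a_{l−1}. -/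
theorem kl_summability_argument (a c : ℕ → ℝ) (C : ℝ) (l : ℕ)
    (ha : ∀ k, 0 ≤ a k) (hc : ∀ k, 0 ≤ c k) (hcmono : Antitone c)
    (hC : 0 < C) (hl : 1 ≤ l)
    (hrec : ∀ k, l ≤ k → a k ^ 2 ≤ C * (c k - c (k + 1)) * a (k - 1)) :
    Summable (fun j => a (j + l)) ∧ ∑' j, a (j + l) ≤ C * c l + a (l - 1) := by
  -- AM-GM step: for k ≥ l, 2 a k ≤ C (c k - c (k+1)) + a (k-1)
  have hstep : ∀ k, l ≤ k → 2 * a k ≤ C * (c k - c (k + 1)) + a (k - 1) := by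
    intro k hk
    have hX : 0 ≤ C * (c k - c (k + 1)) := by
      have h := hcmono (Nat.le_succ k)
      have : 0 ≤ c k - c (k+1) := by linarith
      positivity
    have hY := ha (k - 1)
    have h := hrec k hk
    nlinarith [sq_nonneg (C * (c k - c (k + 1)) - a (k - 1)), ha k,
      sq_nonneg (C * (c k - c (k + 1)) + a (k - 1))]
  -- key telescoping bound
  have key : ∀ N, (∑ j ∈ Finset.range N, a (j + l)) + a (l + N - 1)
      ≤ C * (c l - c (l + N)) + a (l - 1) := by
    intro N
    induction N with
    | zero => simp
    | succ N ih =>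
      have h1 : l + (N + 1) - 1 = l + N := by omega
      have h2 : l ≤ l + N := Nat.le_add_right l N
      have h3 := hstep (l + N) h2
      have h4 : l + N - 1 = l + N - 1 := rfl
      rw [Finset.sum_range_succ]
      have hnl : N + l = l + N := by omega
      rw [h1, hnl]
      have h5 : l + N + 1 = l + (N + 1) := by omega
      rw [h5] at h3
      linarith
  have bound : ∀ N, (∑ j ∈ Finset.range N, a (j + l)) ≤ C * c l + a (l - 1) := by
    intro N
    have h := key N
    have h1 := ha (l + N - 1)
    have h2 : 0 ≤ C * c (l + N) := mul_nonneg hC.le (hc _)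
    linarith
  have hsum : Summable (fun j => a (j + l)) :=
    summable_of_sum_range_le (fun j => ha (j + l)) bound
  exact ⟨hsum, Summable.tsum_le_of_sum_range_le hsum bound⟩
end

section
/- Let A ∈ ℝ^{m×n} have nonnegative entries, with every row of A nonzero and with unit column sums, i.e., ∑_{i=1}^m A_{ij} = 1 for every j = 1, …, n, and let b ∈ ℝᵐ have strictly positive entries. Define, on the open positive orthant ℝ₊₊ⁿ, f(x) = D_KL(Ax, b) := ∑_{i=1}^m ((Ax)_i·log((Ax)_i/b_i) + b_i − (Ax)_i) and φ(x) = ∑_{j=1}^n x_j·log x_j + (1/2)‖x‖². Then both φ − f and φ + f are convex on ℝ₊₊ⁿ; that is, the pair (f, φ) is 1-smad on ℝ₊₊ⁿ. -/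
open Real

/-- Two-point log-sum inequality (joint convexity of relative entropy kernel). -/
lemma key_logsum (a b x1 x2 y1 y2 : ℝ) (ha : 0 ≤ a) (hb : 0 ≤ b) (hab : a + b = 1)
    (hx1 : 0 ≤ x1) (hx2 : 0 ≤ x2) (hy1 : 0 < y1) (hy2 : 0 < y2) :
    (a * x1 + b * x2) * Real.log ((a * x1 + b * x2) / (a * y1 + b * y2)) ≤
      a * (x1 * Real.log (x1 / y1)) + b * (x2 * Real.log (x2 / y2)) := by
  have ht : 0 < a * y1 + b * y2 := by
    rcases eq_or_lt_of_le ha with h | h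
    · have hb1 : b = 1 := by linarith
      rw [← h, hb1]; simpa using hy2
    · have h1 : 0 < a * y1 := mul_pos h hy1
      have h2 : 0 ≤ b * y2 := mul_nonneg hb hy2.le
      linarith
  have hw1 : 0 ≤ a * y1 / (a * y1 + b * y2) := by positivity
  have hw2 : 0 ≤ b * y2 / (a * y1 + b * y2) := by positivity
  have hwsum : a * y1 / (a * y1 + b * y2) + b * y2 / (a * y1 + b * y2) = 1 := by
    field_simp
  have hp : (x1 / y1) ∈ Set.Ici (0 : ℝ) := Set.mem_Ici.2 (by positivity)
  have hq : (x2 / y2) ∈ Set.Ici (0 : ℝ) := Set.mem_Ici.2 (by positivity)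
  have H := Real.convexOn_mul_log.2 hp hq hw1 hw2 hwsum
  simp only [smul_eq_mul] at H
  have harg : a * y1 / (a * y1 + b * y2) * (x1 / y1) + b * y2 / (a * y1 + b * y2) * (x2 / y2)
      = (a * x1 + b * x2) / (a * y1 + b * y2) := by
    field_simp
  rw [harg] at H
  have H2 := mul_le_mul_of_nonneg_left H ht.le
  have e0 : (a * y1 + b * y2) *
      ((a * x1 + b * x2) / (a * y1 + b * y2) * Real.log ((a * x1 + b * x2) / (a * y1 + b * y2)))
      = (a * x1 + b * x2) * Real.log ((a * x1 + b * x2) / (a * y1 + b * y2)) := by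
    rw [show (a * y1 + b * y2) *
        ((a * x1 + b * x2) / (a * y1 + b * y2) * Real.log ((a * x1 + b * x2) / (a * y1 + b * y2)))
        = ((a * y1 + b * y2) * ((a * x1 + b * x2) / (a * y1 + b * y2))) *
          Real.log ((a * x1 + b * x2) / (a * y1 + b * y2)) from by ring,
      mul_div_cancel₀ _ ht.ne']
  have e1 : (a * y1 + b * y2) *
      (a * y1 / (a * y1 + b * y2) * (x1 / y1 * Real.log (x1 / y1))
        + b * y2 / (a * y1 + b * y2) * (x2 / y2 * Real.log (x2 / y2)))
      = a * (x1 * Real.log (x1 / y1)) + b * (x2 * Real.log (x2 / y2)) := by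
    field_simp
  rw [e0, e1] at H2
  exact H2

/-- Per-row inequality: convexity of relative entropy against a weighted sum. -/
lemma per_row {n : ℕ} (c x y : Fin n → ℝ) (hc : ∀ j, 0 ≤ c j)
    (hx : ∀ j, 0 < x j) (hy : ∀ j, 0 < y j) (a b : ℝ)
    (ha : 0 ≤ a) (hb : 0 ≤ b) (hab : a + b = 1)
    (hX : 0 < ∑ j, c j * x j) (hY : 0 < ∑ j, c j * y j) :
    (∑ j, c j * ((a * x j + b * y j) * Real.log (a * x j + b * y j)))
      - (a * ∑ j, c j * x j + b * ∑ j, c j * y j)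
        * Real.log (a * (∑ j, c j * x j) + b * ∑ j, c j * y j)
    ≤ a * ((∑ j, c j * (x j * Real.log (x j))) - (∑ j, c j * x j) * Real.log (∑ j, c j * x j))
      + b * ((∑ j, c j * (y j * Real.log (y j)))
        - (∑ j, c j * y j) * Real.log (∑ j, c j * y j)) := by
  set X := ∑ j, c j * x j with hXdef
  set Y := ∑ j, c j * y j with hYdef
  have hZ : 0 < a * X + b * Y := by
    rcases eq_or_lt_of_le ha with h | h
    · have hb1 : b = 1 := by linarith
      rw [← h, hb1]; simpa using hY
    · have h1 : 0 < a * X := mul_pos h hX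
      have h2 : 0 ≤ b * Y := mul_nonneg hb hY.le
      linarith
  have hz : ∀ j, 0 < a * x j + b * y j := by
    intro j
    rcases eq_or_lt_of_le ha with h | h
    · have hb1 : b = 1 := by linarith
      rw [← h, hb1]; simpa using hy j
    · have h1 : 0 < a * x j := mul_pos h (hx j)
      have h2 : 0 ≤ b * y j := mul_nonneg hb (hy j).le
      linarith
  -- pointwise log-sum inequality, multiplied by the weights and summed
  have HS : ∑ j, c j * ((a * x j + b * y j) * Real.log ((a * x j + b * y j) / (a * X + b * Y)))
      ≤ ∑ j, c j * (a * (x j * Real.log (x j / X)) + b * (y j * Real.log (y j / Y))) :=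
    Finset.sum_le_sum fun j _ => mul_le_mul_of_nonneg_left
      (key_logsum a b (x j) (y j) X Y ha hb hab (hx j).le (hy j).le hX hY) (hc j)
  have hsumz : ∑ j, c j * (a * x j + b * y j) = a * X + b * Y := by
    rw [hXdef, hYdef, Finset.mul_sum, Finset.mul_sum, ← Finset.sum_add_distrib]
    exact Finset.sum_congr rfl fun j _ => by ring
  have eL : ∑ j, c j * ((a * x j + b * y j) * Real.log ((a * x j + b * y j) / (a * X + b * Y)))
      = (∑ j, c j * ((a * x j + b * y j) * Real.log (a * x j + b * y j)))
        - (a * X + b * Y) * Real.log (a * X + b * Y) := by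
    have h1 : ∀ j ∈ Finset.univ,
        c j * ((a * x j + b * y j) * Real.log ((a * x j + b * y j) / (a * X + b * Y)))
        = c j * ((a * x j + b * y j) * Real.log (a * x j + b * y j))
          - (c j * (a * x j + b * y j)) * Real.log (a * X + b * Y) := by
      intro j _
      rw [Real.log_div (hz j).ne' hZ.ne']
      ring
    rw [Finset.sum_congr rfl h1, Finset.sum_sub_distrib, ← Finset.sum_mul, hsumz]
  have eR : ∑ j, c j * (a * (x j * Real.log (x j / X)) + b * (y j * Real.log (y j / Y)))
      = a * ((∑ j, c j * (x j * Real.log (x j))) - X * Real.log X)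
        + b * ((∑ j, c j * (y j * Real.log (y j))) - Y * Real.log Y) := by
    have h1 : ∀ j ∈ Finset.univ,
        c j * (a * (x j * Real.log (x j / X)) + b * (y j * Real.log (y j / Y)))
        = a * (c j * (x j * Real.log (x j))) - a * ((c j * x j) * Real.log X)
          + (b * (c j * (y j * Real.log (y j))) - b * ((c j * y j) * Real.log Y)) := by
      intro j _
      rw [Real.log_div (hx j).ne' hX.ne', Real.log_div (hy j).ne' hY.ne']
      ring
    rw [Finset.sum_congr rfl h1, Finset.sum_add_distrib, Finset.sum_sub_distrib,
      Finset.sum_sub_distrib, ← Finset.mul_sum, ← Finset.mul_sum, ← Finset.mul_sum,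
      ← Finset.mul_sum, ← Finset.sum_mul, ← Finset.sum_mul, ← hXdef, ← hYdef]
    ring
  rw [eL, eR] at HS
  linarith

theorem kl_divergence_entropy_one_smad {m n : ℕ}
    (A : Matrix (Fin m) (Fin n) ℝ)
    (hA0 : ∀ i j, 0 ≤ A i j)
    (hArow : ∀ i, ∃ j, A i j ≠ 0)
    (hAcol : ∀ j, ∑ i, A i j = 1)
    (b : Fin m → ℝ) (hb : ∀ i, 0 < b i)
    (C : Set (EuclideanSpace ℝ (Fin n)))
    (hC : C = {x | ∀ j, 0 < x j})
    (f φ : EuclideanSpace ℝ (Fin n) → ℝ)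
    (hfdef : f = fun x => ∑ i,
      ((∑ j, A i j * x j) * Real.log ((∑ j, A i j * x j) / b i)
        + b i - ∑ j, A i j * x j))
    (hφdef : φ = fun x => (∑ j, x j * Real.log (x j)) + (1 / 2) * ‖x‖ ^ 2) :
    ConvexOn ℝ C (fun x => φ x - f x) ∧ ConvexOn ℝ C (fun x => φ x + f x) := by
  subst hC hfdef hφdef
  -- convexity of the positive orthant
  have hCc : Convex ℝ {x : EuclideanSpace ℝ (Fin n) | ∀ j, 0 < x j} := by
    intro x hx y hy a b ha hb hab
    simp only [Set.mem_setOf_eq] at hx hy ⊢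
    intro j
    have hco : (a • x + b • y) j = a * x j + b * y j := by
      simp [PiLp.add_apply, PiLp.smul_apply, smul_eq_mul]
    rw [hco]
    rcases eq_or_lt_of_le ha with h | h
    · have hb1 : b = 1 := by linarith
      rw [← h, hb1]; simpa using hy j
    · have h1 : 0 < a * x j := mul_pos h (hx j)
      have h2 : 0 ≤ b * y j := mul_nonneg hb (hy j).le
      linarith
  -- the main pointwise work, shared by both components
  have main : ∀ (x y : EuclideanSpace ℝ (Fin n)), (∀ j, 0 < x j) → (∀ j, 0 < y j) →
      ∀ (s t : ℝ), 0 ≤ s → 0 ≤ t → s + t = 1 →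
      ((∑ j, (s * x j + t * y j) * Real.log (s * x j + t * y j))
          + 1 / 2 * ‖s • x + t • y‖ ^ 2
          - ∑ i, ((∑ j, A i j * (s * x j + t * y j))
              * Real.log ((∑ j, A i j * (s * x j + t * y j)) / b i)
              + b i - ∑ j, A i j * (s * x j + t * y j))
        ≤ s * ((∑ j, x j * Real.log (x j)) + 1 / 2 * ‖x‖ ^ 2
            - ∑ i, ((∑ j, A i j * x j) * Real.log ((∑ j, A i j * x j) / b i)
              + b i - ∑ j, A i j * x j))
          + t * ((∑ j, y j * Real.log (y j)) + 1 / 2 * ‖y‖ ^ 2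
            - ∑ i, ((∑ j, A i j * y j) * Real.log ((∑ j, A i j * y j) / b i)
              + b i - ∑ j, A i j * y j)))
      ∧ ((∑ j, (s * x j + t * y j) * Real.log (s * x j + t * y j))
          + 1 / 2 * ‖s • x + t • y‖ ^ 2
          + ∑ i, ((∑ j, A i j * (s * x j + t * y j))
              * Real.log ((∑ j, A i j * (s * x j + t * y j)) / b i)
              + b i - ∑ j, A i j * (s * x j + t * y j))
        ≤ s * ((∑ j, x j * Real.log (x j)) + 1 / 2 * ‖x‖ ^ 2
            + ∑ i, ((∑ j, A i j * x j) * Real.log ((∑ j, A i j * x j) / b i)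
              + b i - ∑ j, A i j * x j))
          + t * ((∑ j, y j * Real.log (y j)) + 1 / 2 * ‖y‖ ^ 2
            + ∑ i, ((∑ j, A i j * y j) * Real.log ((∑ j, A i j * y j) / b i)
              + b i - ∑ j, A i j * y j))) := by
    intro x y hx hy s t hs ht hst
    -- positivity facts
    have hz : ∀ j, 0 < s * x j + t * y j := by
      intro j
      rcases eq_or_lt_of_le hs with h | h
      · have hb1 : t = 1 := by linarith
        rw [← h, hb1]; simpa using hy j
      · have h1 : 0 < s * x j := mul_pos h (hx j)
        have h2 : 0 ≤ t * y j := mul_nonneg ht (hy j).le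
        linarith
    have hXpos : ∀ (u : Fin n → ℝ), (∀ j, 0 < u j) → ∀ i, 0 < ∑ j, A i j * u j := by
      intro u hu i
      obtain ⟨j0, hj0⟩ := hArow i
      refine Finset.sum_pos' (fun j _ => mul_nonneg (hA0 i j) (hu j).le)
        ⟨j0, Finset.mem_univ _, mul_pos ((hA0 i j0).lt_of_ne (Ne.symm hj0)) (hu j0)⟩
    have hXp : ∀ i, 0 < ∑ j, A i j * x j := hXpos x hx
    have hYp : ∀ i, 0 < ∑ j, A i j * y j := hXpos y hy
    have hZp : ∀ i, 0 < ∑ j, A i j * (s * x j + t * y j) := hXpos _ hz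
    -- linear expansion of the rows
    have hZX : ∀ i, ∑ j, A i j * (s * x j + t * y j)
        = s * (∑ j, A i j * x j) + t * (∑ j, A i j * y j) := by
      intro i
      rw [Finset.mul_sum, Finset.mul_sum, ← Finset.sum_add_distrib]
      exact Finset.sum_congr rfl fun j _ => by ring
    -- (I1) norm-square convexity
    have I1 : ‖s • x + t • y‖ ^ 2 ≤ s * ‖x‖ ^ 2 + t * ‖y‖ ^ 2 := by
      have h1 : ‖s • x + t • y‖ ≤ s * ‖x‖ + t * ‖y‖ := by
        calc ‖s • x + t • y‖ ≤ ‖s • x‖ + ‖t • y‖ := norm_add_le _ _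
          _ = s * ‖x‖ + t * ‖y‖ := by
              rw [norm_smul, norm_smul, Real.norm_eq_abs, Real.norm_eq_abs,
                abs_of_nonneg hs, abs_of_nonneg ht]
      have h2 : ‖s • x + t • y‖ ^ 2 ≤ (s * ‖x‖ + t * ‖y‖) ^ 2 :=
        pow_le_pow_left₀ (norm_nonneg _) h1 2
      have h3 : (s * ‖x‖ + t * ‖y‖) ^ 2 ≤ s * ‖x‖ ^ 2 + t * ‖y‖ ^ 2 := by
        nlinarith [mul_nonneg (mul_nonneg hs ht) (sq_nonneg (‖x‖ - ‖y‖))]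
      linarith
    -- (I4) entropy convexity, coordinatewise
    have I4 : ∑ j, (s * x j + t * y j) * Real.log (s * x j + t * y j)
        ≤ s * (∑ j, x j * Real.log (x j)) + t * ∑ j, y j * Real.log (y j) := by
      rw [Finset.mul_sum, Finset.mul_sum, ← Finset.sum_add_distrib]
      refine Finset.sum_le_sum fun j _ => ?_
      have := Real.convexOn_mul_log.2 (Set.mem_Ici.2 (hx j).le)
        (Set.mem_Ici.2 (hy j).le) hs ht hst
      simpa [smul_eq_mul] using this
    -- (I2) convexity of the KL term
    have I2 : ∑ i, ((∑ j, A i j * (s * x j + t * y j))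
          * Real.log ((∑ j, A i j * (s * x j + t * y j)) / b i)
          + b i - ∑ j, A i j * (s * x j + t * y j))
        ≤ s * (∑ i, ((∑ j, A i j * x j) * Real.log ((∑ j, A i j * x j) / b i)
            + b i - ∑ j, A i j * x j))
          + t * ∑ i, ((∑ j, A i j * y j) * Real.log ((∑ j, A i j * y j) / b i)
            + b i - ∑ j, A i j * y j) := by
      rw [Finset.mul_sum, Finset.mul_sum, ← Finset.sum_add_distrib]
      refine Finset.sum_le_sum fun i _ => ?_
      rw [hZX i]
      have key := key_logsum s t (∑ j, A i j * x j) (∑ j, A i j * y j) (b i) (b i)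
        hs ht hst (hXp i).le (hYp i).le (hb i) (hb i)
      rw [show s * b i + t * b i = b i from by rw [← add_mul, hst, one_mul]] at key
      have hBi : s * b i + t * b i = b i := by rw [← add_mul, hst, one_mul]
      linarith [key, hBi]
    -- column-sum identity
    have hcol : ∀ (g : Fin n → ℝ), ∑ j, g j = ∑ i, ∑ j, A i j * g j := by
      intro g
      rw [Finset.sum_comm]
      refine Finset.sum_congr rfl fun j _ => ?_
      rw [← Finset.sum_mul, hAcol j, one_mul]
    -- (I3) relative smoothness key inequality
    have I3 : (∑ j, (s * x j + t * y j) * Real.log (s * x j + t * y j))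
          - ∑ i, (∑ j, A i j * (s * x j + t * y j))
              * Real.log (∑ j, A i j * (s * x j + t * y j))
        ≤ s * ((∑ j, x j * Real.log (x j))
            - ∑ i, (∑ j, A i j * x j) * Real.log (∑ j, A i j * x j))
          + t * ((∑ j, y j * Real.log (y j))
            - ∑ i, (∑ j, A i j * y j) * Real.log (∑ j, A i j * y j)) := by
      calc (∑ j, (s * x j + t * y j) * Real.log (s * x j + t * y j))
            - ∑ i, (∑ j, A i j * (s * x j + t * y j))
                * Real.log (∑ j, A i j * (s * x j + t * y j))
          = ∑ i, ((∑ j, A i j * ((s * x j + t * y j) * Real.log (s * x j + t * y j)))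
              - (s * (∑ j, A i j * x j) + t * ∑ j, A i j * y j)
                * Real.log (s * (∑ j, A i j * x j) + t * ∑ j, A i j * y j)) := by
            rw [hcol fun j => (s * x j + t * y j) * Real.log (s * x j + t * y j),
              ← Finset.sum_sub_distrib]
            refine Finset.sum_congr rfl fun i _ => ?_
            rw [hZX i]
        _ ≤ ∑ i, (s * ((∑ j, A i j * (x j * Real.log (x j)))
              - (∑ j, A i j * x j) * Real.log (∑ j, A i j * x j))
              + t * ((∑ j, A i j * (y j * Real.log (y j)))
              - (∑ j, A i j * y j) * Real.log (∑ j, A i j * y j))) :=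
            Finset.sum_le_sum fun i _ =>
              per_row (A i) x y (hA0 i) hx hy s t hs ht hst (hXp i) (hYp i)
        _ = s * ((∑ j, x j * Real.log (x j))
              - ∑ i, (∑ j, A i j * x j) * Real.log (∑ j, A i j * x j))
            + t * ((∑ j, y j * Real.log (y j))
              - ∑ i, (∑ j, A i j * y j) * Real.log (∑ j, A i j * y j)) := by
            rw [Finset.sum_add_distrib, ← Finset.mul_sum, ← Finset.mul_sum,
              Finset.sum_sub_distrib, Finset.sum_sub_distrib,
              ← hcol fun j => x j * Real.log (x j), ← hcol fun j => y j * Real.log (y j)]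
    -- splitting of the KL sum into entropy and affine parts
    have hfsplit : ∀ (u : Fin n → ℝ), (∀ i, 0 < ∑ j, A i j * u j) →
        ∑ i, ((∑ j, A i j * u j) * Real.log ((∑ j, A i j * u j) / b i)
          + b i - ∑ j, A i j * u j)
        = (∑ i, (∑ j, A i j * u j) * Real.log (∑ j, A i j * u j))
          - (∑ i, (∑ j, A i j * u j) * Real.log (b i))
          + (∑ i, b i) - ∑ i, ∑ j, A i j * u j := by
      intro u hu
      have h1 : ∀ i ∈ Finset.univ,
          (∑ j, A i j * u j) * Real.log ((∑ j, A i j * u j) / b i)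
            + b i - ∑ j, A i j * u j
          = ((∑ j, A i j * u j) * Real.log (∑ j, A i j * u j)
              - (∑ j, A i j * u j) * Real.log (b i) + b i) - ∑ j, A i j * u j := by
        intro i _
        rw [Real.log_div (hu i).ne' (hb i).ne']
        ring
      rw [Finset.sum_congr rfl h1, Finset.sum_sub_distrib, Finset.sum_add_distrib,
        Finset.sum_sub_distrib]
    -- linear identities for the affine parts
    have hlin1 : ∑ i, (∑ j, A i j * (s * x j + t * y j)) * Real.log (b i)
        = s * (∑ i, (∑ j, A i j * x j) * Real.log (b i))
          + t * ∑ i, (∑ j, A i j * y j) * Real.log (b i) := by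
      rw [Finset.mul_sum, Finset.mul_sum, ← Finset.sum_add_distrib]
      refine Finset.sum_congr rfl fun i _ => ?_
      rw [hZX i]; ring
    have hlin2 : ∑ i, ∑ j, A i j * (s * x j + t * y j)
        = s * (∑ i, ∑ j, A i j * x j) + t * ∑ i, ∑ j, A i j * y j := by
      rw [Finset.mul_sum, Finset.mul_sum, ← Finset.sum_add_distrib]
      refine Finset.sum_congr rfl fun i _ => ?_
      rw [hZX i]
    have hB : s * (∑ i, b i) + t * (∑ i, b i) = ∑ i, b i := by
      rw [← add_mul, hst, one_mul]
    constructor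
    · rw [hfsplit _ hZp, hfsplit _ hXp, hfsplit _ hYp]
      nlinarith [I1, I3, hlin1, hlin2, hB]
    · nlinarith [I1, I4, I2]
  refine ⟨⟨hCc, ?_⟩, ⟨hCc, ?_⟩⟩ <;>
  · intro x hx y hy a b ha hb hab
    simp only [Set.mem_setOf_eq] at hx hy
    have hco : ∀ j, (a • x + b • y) j = a * x j + b * y j := by
      intro j; simp [PiLp.add_apply, PiLp.smul_apply, smul_eq_mul]
    simp only [smul_eq_mul, hco]
    first
      | exact (main x y hx hy a b ha hb hab).1
      | exact (main x y hx hy a b ha hb hab).2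
end
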